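/- arXiv:1612.04233 — 8 statements merged into one kernel-verified Lean document; each statement's English description precedes it below -/
import Mathlib

section
/- Let G be a separable abelian topological group whose topology is induced by an invariant metric d that is bounded by a constant K > 0. Then there exists an invariant metric D on the direct sum G ⊕ ℤ (i.e., the product group G × ℤ) such that: (1) D is bounded by K; (2) D extends d, meaning D((g,0),(h,0)) = d(g,h) for all g,h ∈ G; and (3) the cyclic subgroup {(0,n) : n ∈ ℤ} generated by (0,1) is dense in G × ℤ with respect to the topology induced by D. -/
namespace BIMaux

def s : ℕ → ℕ
  | 0 => 1
  | n+1 => 4^(n+1) * s n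

lemma s_pos : ∀ n, 0 < s n
  | 0 => one_pos
  | n+1 => by
    have := s_pos n
    simp only [s]
    positivity

lemma s_mono : Monotone s := by
  apply monotone_nat_of_le_succ
  intro n
  have h := s_pos n
  calc s n = 1 * s n := (one_mul _).symm
    _ ≤ 4^(n+1) * s n := by
        apply Nat.mul_le_mul_right
        exact Nat.one_le_pow _ _ (by norm_num)
    _ = s (n+1) := rfl

lemma s_ge (n : ℕ) : 2^n ≤ s n := by
  induction n with
  | zero => simp [s]
  | succ n ih =>
    have : (2:ℕ)^(n+1) ≤ 4^(n+1) := Nat.pow_le_pow_left (by norm_num) _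
    calc (2:ℕ)^(n+1) = 2^(n+1) * 1 := (mul_one _).symm
      _ ≤ 4^(n+1) * s n := Nat.mul_le_mul this (s_pos n)
      _ = s (n+1) := rfl

lemma s_big (n : ℕ) : 2 * ∑ m ∈ Finset.range n, 2^m * s m < s n := by
  induction n with
  | zero => simp [s]
  | succ n ih =>
    rw [Finset.sum_range_succ, Nat.mul_add]
    have h1 : 2 * ∑ m ∈ Finset.range n, 2^m * s m + 2 * (2^n * s n)
        < s n + 2^(n+1) * s n := by
      have : 2 * (2^n * s n) = 2^(n+1) * s n := by ring
      omega
    have h2 : s n + 2^(n+1) * s n ≤ s (n+1) := by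
      have : (1 + 2^(n+1)) ≤ 4^(n+1) := by
        have h3 : (2:ℕ)^(n+1) < 4^(n+1) := by
          apply Nat.pow_lt_pow_left (by norm_num); omega
        have h4 : (1:ℕ) ≤ 2^(n+1) := Nat.one_le_two_pow
        omega
      calc s n + 2^(n+1) * s n = (1 + 2^(n+1)) * s n := by ring
        _ ≤ 4^(n+1) * s n := Nat.mul_le_mul_right _ this
        _ = s (n+1) := rfl
    omega

/-- Key combinatorial lemma: if all coefficients are small, any nonzero coefficient index
bounds the sum from below. -/
lemma key (B : ℕ) (c : ℕ → ℤ) (hc : ∀ n < B, |c n| < 2^n) :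
    ∀ t < B, c t ≠ 0 → (s t : ℤ) ≤ 2 * |∑ n ∈ Finset.range B, c n * (s n : ℤ)| := by
  induction B with
  | zero => intro t ht; omega
  | succ B ih =>
    intro t ht hct
    by_cases hB : c B = 0
    · rw [Finset.sum_range_succ, hB, zero_mul, add_zero]
      have ht' : t < B := by
        rcases Nat.lt_succ_iff_lt_or_eq.mp ht with h | h
        · exact h
        · exact absurd (h ▸ hB) hct
      exact ih (fun n hn => hc n (Nat.lt_succ_of_lt hn)) t ht' hct
    · -- c B ≠ 0 : the sum is at least s B / 2 in absolute value
      have hsBpos : (0:ℤ) < (s B : ℤ) := by exact_mod_cast s_pos B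
      have hst : (s t : ℤ) ≤ (s B : ℤ) := by
        exact_mod_cast s_mono (Nat.lt_succ_iff.mp ht)
      have habs : |∑ n ∈ Finset.range B, c n * (s n : ℤ)|
          ≤ ∑ n ∈ Finset.range B, (2:ℤ)^n * (s n : ℤ) := by
        calc |∑ n ∈ Finset.range B, c n * (s n : ℤ)|
            ≤ ∑ n ∈ Finset.range B, |c n * (s n : ℤ)| := Finset.abs_sum_le_sum_abs _ _
          _ ≤ ∑ n ∈ Finset.range B, (2:ℤ)^n * (s n : ℤ) := by
              apply Finset.sum_le_sum
              intro n hn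
              rw [abs_mul, abs_of_nonneg (by positivity : (0:ℤ) ≤ (s n : ℤ))]
              have := hc n (Nat.lt_succ_of_lt (Finset.mem_range.mp hn))
              exact mul_le_mul_of_nonneg_right (le_of_lt this) (by positivity)
      have hbig : 2 * ∑ n ∈ Finset.range B, (2:ℤ)^n * (s n : ℤ) < (s B : ℤ) := by
        have hcast : (2 * ∑ m ∈ Finset.range B, 2^m * s m : ℕ) < s B := s_big B
        calc 2 * ∑ n ∈ Finset.range B, (2:ℤ)^n * (s n : ℤ)
            = ((2 * ∑ m ∈ Finset.range B, 2^m * s m : ℕ) : ℤ) := by push_cast; ring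
          _ < (s B : ℤ) := by exact_mod_cast hcast
      have hcB1 : 1 ≤ |c B| := Int.one_le_abs (by omega)
      have habs2 : |c B * (s B : ℤ)| = |c B| * (s B : ℤ) := by
        rw [abs_mul, abs_of_nonneg (le_of_lt hsBpos)]
      have htri : |c B * (s B : ℤ)| - |∑ n ∈ Finset.range B, c n * (s n : ℤ)|
          ≤ |∑ n ∈ Finset.range (B+1), c n * (s n : ℤ)| := by
        rw [Finset.sum_range_succ]
        have h2 := abs_sub_abs_le_abs_sub (c B * (s B : ℤ))
          (-(∑ n ∈ Finset.range B, c n * (s n : ℤ)))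
        simp only [abs_neg, sub_neg_eq_add] at h2
        calc |c B * (s B : ℤ)| - |∑ n ∈ Finset.range B, c n * (s n : ℤ)|
            ≤ |c B * (s B : ℤ) + ∑ n ∈ Finset.range B, c n * (s n : ℤ)| := h2
          _ = |∑ n ∈ Finset.range B, c n * (s n : ℤ) + c B * (s B : ℤ)| := by
              rw [add_comm]
      have h1 : (s B : ℤ) ≤ |c B| * (s B : ℤ) := by nlinarith
      calc (s t : ℤ) ≤ (s B : ℤ) := hst
        _ ≤ 2 * (|c B| * (s B : ℤ)) - (s B : ℤ) := by nlinarith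
        _ ≤ 2 * |∑ n ∈ Finset.range (B+1), c n * (s n : ℤ)| := by
            rw [← habs2]; nlinarith
end BIMaux
section Part2
namespace BIMaux

variable {G : Type*} [AddCommGroup G] [MetricSpace G]

def TT (c : ℕ → ℤ) (B : ℕ) : ℤ := ∑ n ∈ Finset.range B, c n * (s n : ℤ)
def PP (a : ℕ → G) (c : ℕ → ℤ) (B : ℕ) : G := ∑ n ∈ Finset.range B, c n • a n
noncomputable def WW (K : ℝ) (c : ℕ → ℤ) (B : ℕ) : ℝ :=
  ∑ n ∈ Finset.range B, |(c n : ℝ)| * (K / 2^n)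

def SS (a : ℕ → G) (K : ℝ) (p : G × ℤ) : Set ℝ :=
  {r | ∃ B c, TT c B = p.2 ∧ r = dist p.1 (PP a c B) + WW K c B}

noncomputable def NN (a : ℕ → G) (K : ℝ) (p : G × ℤ) : ℝ := min K (sInf (SS a K p))

variable (a : ℕ → G) (K : ℝ)

lemma SS_nonempty (p : G × ℤ) : (SS a K p).Nonempty := by
  refine ⟨_, 1, fun _ => p.2, ?_, rfl⟩
  simp [TT, s]

lemma WW_nonneg (hK : 0 < K) (c : ℕ → ℤ) (B : ℕ) : 0 ≤ WW K c B := by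
  apply Finset.sum_nonneg
  intro n _
  positivity

lemma SS_nonneg (hK : 0 < K) (p : G × ℤ) : ∀ r ∈ SS a K p, 0 ≤ r := by
  rintro r ⟨B, c, -, rfl⟩
  have := WW_nonneg K hK c B
  have := dist_nonneg (x := p.1) (y := PP a c B)
  linarith

lemma SS_bddBelow (hK : 0 < K) (p : G × ℤ) : BddBelow (SS a K p) :=
  ⟨0, fun r hr => SS_nonneg a K hK p r hr⟩

lemma NN_nonneg (hK : 0 < K) (p : G × ℤ) : 0 ≤ NN a K p :=
  le_min (le_of_lt hK) (le_csInf (SS_nonempty a K p) (SS_nonneg a K hK p))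

lemma NN_le_K (p : G × ℤ) : NN a K p ≤ K := min_le_left _ _

lemma NN_le_elem (hK : 0 < K) (p : G × ℤ) {r : ℝ} (hr : r ∈ SS a K p) :
    NN a K p ≤ r :=
  le_trans (min_le_right _ _) (csInf_le (SS_bddBelow a K hK p) hr)

/-- coefficient extraction -/
lemma coeff_small (hK : 0 < K) {c : ℕ → ℤ} {B : ℕ} {θ : ℝ}
    (hW : WW K c B < K * θ) :
    ∀ n < B, (|c n| : ℝ) < 2^n * θ := by
  intro n hn
  have hterm : |(c n : ℝ)| * (K / 2^n) ≤ WW K c B := by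
    apply Finset.single_le_sum (f := fun n => |(c n : ℝ)| * (K / 2^n))
    · intro i _; positivity
    · exact Finset.mem_range.mpr hn
  have h1 : |(c n : ℝ)| * (K / 2^n) < K * θ := lt_of_le_of_lt hterm hW
  have h2 : (0:ℝ) < K / 2^n := by positivity
  have h3 : |(c n : ℝ)| < (K * θ) / (K / 2^n) := (lt_div_iff₀ h2).mpr h1
  have h4 : (K * θ) / (K / 2^n) = 2^n * θ := by
    field_simp
  rw [← Int.cast_abs]
  rw [h4] at h3
  exact_mod_cast h3

lemma coeff_int_small (hK : 0 < K) {c : ℕ → ℤ} {B : ℕ} (hW : WW K c B < K) :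
    ∀ n < B, |c n| < 2^n := by
  intro n hn
  have := coeff_small K hK (θ := 1) (by simpa using hW) n hn
  have h2 : (|c n| : ℝ) < 2^n := by simpa using this
  exact_mod_cast h2

/-- If the sum vanishes and the weight is under K, all coefficients vanish. -/
lemma coeff_zero (hK : 0 < K) {c : ℕ → ℤ} {B : ℕ} (hW : WW K c B < K)
    (hT : TT c B = 0) : ∀ n < B, c n = 0 := by
  intro n hn
  by_contra hne
  have hkey := key B c (coeff_int_small K hK hW) n hn hne
  rw [show (∑ n ∈ Finset.range B, c n * (s n : ℤ)) = TT c B from rfl, hT] at hkey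
  simp at hkey
  have := s_pos n
  omega

/-- Extension: `NN (g, 0) = dist g 0`. -/
lemma NN_ext (hK : 0 < K) (hbdd : ∀ x y : G, dist x y ≤ K) (g : G) :
    NN a K (g, (0 : ℤ)) = dist g 0 := by
  have hmem : dist g 0 ∈ SS a K (g, (0:ℤ)) := by
    refine ⟨0, fun _ => 0, by simp [TT], ?_⟩
    simp [PP, WW]
  apply le_antisymm
  · exact NN_le_elem a K hK _ hmem
  · apply le_min (hbdd g 0)
    apply le_csInf (SS_nonempty a K _)
    rintro r ⟨B, c, hT, rfl⟩
    rcases lt_or_ge (WW K c B) K with hW | hW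
    · have hz := coeff_zero K hK hW hT
      have hP : PP a c B = 0 := by
        apply Finset.sum_eq_zero
        intro n hn
        rw [hz n (Finset.mem_range.mp hn), zero_smul]
      rw [hP]
      have := WW_nonneg K hK c B
      linarith
    · have := hbdd g 0
      have := dist_nonneg (x := g) (y := PP a c B)
      linarith

end BIMaux
end Part2
section Part3
namespace BIMaux

variable {G : Type*} [AddCommGroup G] [MetricSpace G]
variable (a : ℕ → G) (K : ℝ)

lemma sum_pad {M : Type*} [AddCommMonoid M] (f : ℤ → ℕ → M) (hf : ∀ n, f 0 n = 0)
    (c : ℕ → ℤ) {B B' : ℕ} (h : B ≤ B') :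
    ∑ n ∈ Finset.range B', f (if n < B then c n else 0) n
      = ∑ n ∈ Finset.range B, f (c n) n := by
  rw [← Finset.sum_subset (Finset.range_subset_range.mpr h)
    (fun x _ hx => by rw [if_neg (by simpa using hx)]; exact hf x)]
  exact Finset.sum_congr rfl (fun n hn => by rw [if_pos (Finset.mem_range.mp hn)])

def comb (c1 : ℕ → ℤ) (B1 : ℕ) (c2 : ℕ → ℤ) (B2 : ℕ) : ℕ → ℤ :=
  fun n => (if n < B1 then c1 n else 0) + (if n < B2 then c2 n else 0)

lemma TT_comb (c1 : ℕ → ℤ) (B1 : ℕ) (c2 : ℕ → ℤ) (B2 : ℕ) :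
    TT (comb c1 B1 c2 B2) (max B1 B2) = TT c1 B1 + TT c2 B2 := by
  unfold TT comb
  have h1 := sum_pad (f := fun z n => z * (s n : ℤ)) (fun n => zero_mul _) c1
    (le_max_left B1 B2)
  have h2 := sum_pad (f := fun z n => z * (s n : ℤ)) (fun n => zero_mul _) c2
    (le_max_right B1 B2)
  rw [← h1, ← h2, ← Finset.sum_add_distrib]
  exact Finset.sum_congr rfl (fun n _ => add_mul _ _ _)

lemma PP_comb (c1 : ℕ → ℤ) (B1 : ℕ) (c2 : ℕ → ℤ) (B2 : ℕ) :
    PP a (comb c1 B1 c2 B2) (max B1 B2) = PP a c1 B1 + PP a c2 B2 := by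
  unfold PP comb
  have h1 := sum_pad (f := fun z n => z • a n) (fun n => zero_smul ℤ (a n)) c1
    (le_max_left B1 B2)
  have h2 := sum_pad (f := fun z n => z • a n) (fun n => zero_smul ℤ (a n)) c2
    (le_max_right B1 B2)
  rw [← h1, ← h2, ← Finset.sum_add_distrib]
  exact Finset.sum_congr rfl (fun n _ => add_smul _ _ _)

lemma WW_comb (hK : 0 < K) (c1 : ℕ → ℤ) (B1 : ℕ) (c2 : ℕ → ℤ) (B2 : ℕ) :
    WW K (comb c1 B1 c2 B2) (max B1 B2) ≤ WW K c1 B1 + WW K c2 B2 := by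
  unfold WW comb
  have h1 := sum_pad (f := fun z n => |(z : ℝ)| * (K / 2^n)) (fun n => by simp) c1
    (le_max_left B1 B2)
  have h2 := sum_pad (f := fun z n => |(z : ℝ)| * (K / 2^n)) (fun n => by simp) c2
    (le_max_right B1 B2)
  rw [← h1, ← h2, ← Finset.sum_add_distrib]
  apply Finset.sum_le_sum
  intro n _
  have habs : |(((if n < B1 then c1 n else 0) + (if n < B2 then c2 n else 0) : ℤ) : ℝ)|
      ≤ |((if n < B1 then c1 n else 0 : ℤ) : ℝ)| + |((if n < B2 then c2 n else 0 : ℤ) : ℝ)| := by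
    push_cast
    exact abs_add_le _ _
  have hw : (0:ℝ) ≤ K / 2^n := by positivity
  calc |(((if n < B1 then c1 n else 0) + (if n < B2 then c2 n else 0) : ℤ) : ℝ)| * (K / 2^n)
      ≤ (|((if n < B1 then c1 n else 0 : ℤ) : ℝ)| + |((if n < B2 then c2 n else 0 : ℤ) : ℝ)|)
        * (K / 2^n) := mul_le_mul_of_nonneg_right habs hw
    _ = _ := add_mul _ _ _

variable (hinv : ∀ a x y : G, dist (a + x) (a + y) = dist x y)

include hinv in
lemma dist_neg_neg (x y : G) : dist (-x) (-y) = dist x y := by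
  have h := hinv (x + y) (-x) (-y)
  rw [show x + y + -x = y by abel, show x + y + -y = x by abel] at h
  rw [← h, dist_comm]

include hinv in
lemma dist_add_add (x y u v : G) : dist (x + u) (y + v) ≤ dist x y + dist u v := by
  have e1 : dist (x + u) (y + u) = dist x y := by
    rw [show x + u = u + x by abel, show y + u = u + y by abel]
    exact hinv u x y
  have e2 : dist (y + u) (y + v) = dist u v := hinv y u v
  have := dist_triangle (x + u) (y + u) (y + v)
  linarith

lemma PP_neg (c : ℕ → ℤ) (B : ℕ) : PP a (fun n => -c n) B = -PP a c B := by
  unfold PP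
  rw [← Finset.sum_neg_distrib]
  exact Finset.sum_congr rfl (fun n _ => neg_smul _ _)

include hinv in
lemma mem_SS_neg {p : G × ℤ} {r : ℝ} (h : r ∈ SS a K p) : r ∈ SS a K (-p) := by
  obtain ⟨B, c, hT, rfl⟩ := h
  refine ⟨B, fun n => -c n, ?_, ?_⟩
  · show TT (fun n => -c n) B = -p.2
    unfold TT
    rw [← hT]
    unfold TT
    rw [← Finset.sum_neg_distrib]
    exact Finset.sum_congr rfl (fun n _ => neg_mul _ _)
  · have hP := PP_neg a c B
    have hd : dist (-p.1) (PP a (fun n => -c n) B) = dist p.1 (PP a c B) := by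
      rw [hP]
      exact dist_neg_neg hinv _ _
    have hW : WW K (fun n => -c n) B = WW K c B := by
      unfold WW
      exact Finset.sum_congr rfl (fun n _ => by push_cast; rw [abs_neg])
    show dist p.1 (PP a c B) + WW K c B
        = dist (-p).1 (PP a (fun n => -c n) B) + WW K (fun n => -c n) B
    rw [hW, show (-p).1 = -p.1 from rfl, hd]

include hinv in
lemma NN_neg (p : G × ℤ) : NN a K (-p) = NN a K p := by
  have hss : SS a K (-p) = SS a K p := by
    apply Set.Subset.antisymm
    · intro r hr
      have := mem_SS_neg a K hinv hr
      rwa [neg_neg] at this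
    · intro r hr
      exact mem_SS_neg a K hinv hr
  unfold NN
  rw [hss]

include hinv in
lemma sInf_SS_add (hK : 0 < K) (p q : G × ℤ) :
    sInf (SS a K (p + q)) ≤ sInf (SS a K p) + sInf (SS a K q) := by
  apply le_of_forall_pos_le_add
  intro ε hε
  obtain ⟨r1, hr1m, hr1⟩ := Real.lt_sInf_add_pos (SS_nonempty a K p) (half_pos hε)
  obtain ⟨r2, hr2m, hr2⟩ := Real.lt_sInf_add_pos (SS_nonempty a K q) (half_pos hε)
  obtain ⟨B1, c1, hT1, rfl⟩ := hr1m
  obtain ⟨B2, c2, hT2, rfl⟩ := hr2m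
  have hTT : TT (comb c1 B1 c2 B2) (max B1 B2) = (p + q).2 := by
    rw [TT_comb, hT1, hT2]; rfl
  have hmem : dist (p + q).1 (PP a (comb c1 B1 c2 B2) (max B1 B2))
      + WW K (comb c1 B1 c2 B2) (max B1 B2) ∈ SS a K (p + q) :=
    ⟨max B1 B2, comb c1 B1 c2 B2, hTT, rfl⟩
  have hle := csInf_le (SS_bddBelow a K hK _) hmem
  have hPP := PP_comb a c1 B1 c2 B2
  have hWW := WW_comb K hK c1 B1 c2 B2
  have hdist : dist (p + q).1 (PP a (comb c1 B1 c2 B2) (max B1 B2))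
      ≤ dist p.1 (PP a c1 B1) + dist q.1 (PP a c2 B2) := by
    rw [hPP, show (p + q).1 = p.1 + q.1 from rfl]
    exact dist_add_add hinv _ _ _ _
  linarith

include hinv in
lemma NN_add (hK : 0 < K) (p q : G × ℤ) :
    NN a K (p + q) ≤ NN a K p + NN a K q := by
  have h0p : 0 ≤ sInf (SS a K p) := le_csInf (SS_nonempty a K p) (SS_nonneg a K hK p)
  have h0q : 0 ≤ sInf (SS a K q) := le_csInf (SS_nonempty a K q) (SS_nonneg a K hK q)
  have hNp := NN_nonneg a K hK p
  have hNq := NN_nonneg a K hK q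
  have hKle := NN_le_K a K (p + q)
  rcases le_total K (sInf (SS a K p)) with h | h
  · have : NN a K p = K := min_eq_left h
    linarith
  rcases le_total K (sInf (SS a K q)) with h' | h'
  · have : NN a K q = K := min_eq_left h'
    linarith
  · have hp : NN a K p = sInf (SS a K p) := min_eq_right h
    have hq : NN a K q = sInf (SS a K q) := min_eq_right h'
    have h1 : NN a K (p + q) ≤ sInf (SS a K (p + q)) := min_le_right _ _
    have h2 := sInf_SS_add a K hinv hK p q
    linarith

lemma NN_pos (hK : 0 < K) (g : G) (k : ℤ) (hk : k ≠ 0) : 0 < NN a K (g, k) := by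
  set N := k.natAbs with hN
  have hkN : 2 * k.natAbs < s (N + 1) := by
    have h1 : k.natAbs < 2 ^ N := Nat.lt_two_pow_self
    have h2 : 2 ^ (N + 1) ≤ s (N + 1) := s_ge (N + 1)
    have h3 : 2 * k.natAbs < 2 ^ (N + 1) := by
      rw [pow_succ, mul_comm]
      omega
    omega
  have hlow : ∀ r ∈ SS a K (g, k), K / 2 ^ N ≤ r := by
    rintro r ⟨B, c, hT, rfl⟩
    by_contra hcon
    push_neg at hcon
    have hW : WW K c B < K / 2 ^ N := by
      have := dist_nonneg (x := g) (y := PP a c B)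
      linarith
    have hW' : WW K c B < K * (1 / 2 ^ N) := by rw [mul_one_div]; exact hW
    have hsmall := coeff_small K hK hW'
    have hint : ∀ n < B, |c n| < 2 ^ n := by
      intro n hn
      have h1 := hsmall n hn
      have h2 : (2:ℝ) ^ n * (1 / 2 ^ N) ≤ 2 ^ n := by
        rw [mul_one_div]
        apply div_le_self (by positivity)
        exact one_le_pow₀ (by norm_num)
      have h3 : (|c n| : ℝ) < 2 ^ n := lt_of_lt_of_le h1 h2
      exact_mod_cast h3
    have hzero : ∀ n < B, n ≤ N → c n = 0 := by
      intro n hn hnN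
      have h1 := hsmall n hn
      have h2 : (2:ℝ) ^ n * (1 / 2 ^ N) ≤ 1 := by
        rw [mul_one_div]
        apply div_le_one_of_le₀
        · exact pow_le_pow_right₀ (by norm_num) hnN
        · positivity
      have h3 : (|c n| : ℝ) < 1 := lt_of_lt_of_le h1 h2
      have h4 : |c n| < 1 := by exact_mod_cast h3
      have := abs_lt.mp h4
      omega
    have hex : ∃ t, t < B ∧ c t ≠ 0 := by
      by_contra hno
      push_neg at hno
      have hTz : TT c B = 0 :=
        Finset.sum_eq_zero (fun n hn => by
          rw [hno n (Finset.mem_range.mp hn), zero_mul])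
      have hT' : TT c B = k := hT
      exact hk (hT'.symm.trans hTz)
    obtain ⟨t, htB, hct⟩ := hex
    have htN : N < t := by
      by_contra h
      push_neg at h
      exact hct (hzero t htB h)
    have hkey := key B c hint t htB hct
    have hTT : (∑ n ∈ Finset.range B, c n * (s n : ℤ)) = k := hT
    rw [hTT] at hkey
    have hmono : (s (N + 1) : ℤ) ≤ (s t : ℤ) := by exact_mod_cast s_mono htN
    have habs : |k| = (k.natAbs : ℤ) := Int.abs_eq_natAbs k
    have hkNZ : 2 * (k.natAbs : ℤ) < (s (N + 1) : ℤ) := by exact_mod_cast hkN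
    omega
  have h1 : K / 2 ^ N ≤ sInf (SS a K (g, k)) := le_csInf (SS_nonempty a K _) hlow
  have h2 : (0:ℝ) < K / 2 ^ N := by positivity
  exact lt_min hK (lt_of_lt_of_le h2 h1)

end BIMaux
end Part3
open BIMaux in
/-- If `G` is a separable abelian group whose topology comes from an
invariant metric bounded by `K > 0`, then there is an invariant metric `D` on `G × ℤ`,
bounded by `K`, extending the metric of `G`, such that the cyclic subgroup
`{(0, n) : n ∈ ℤ}` is dense for `D`. -/
theorem bounded_invariant_metric_extends_to_dense_cyclic
    (G : Type*) [AddCommGroup G] [MetricSpace G] [TopologicalSpace.SeparableSpace G]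
    (K : ℝ) (hK : 0 < K)
    (hinv : ∀ a x y : G, dist (a + x) (a + y) = dist x y)
    (hbdd : ∀ x y : G, dist x y ≤ K) :
    ∃ D : G × ℤ → G × ℤ → ℝ,
      (∀ x y, 0 ≤ D x y) ∧
      (∀ x y, D x y = 0 ↔ x = y) ∧
      (∀ x y, D x y = D y x) ∧
      (∀ x y z, D x z ≤ D x y + D y z) ∧
      (∀ a x y, D (a + x) (a + y) = D x y) ∧
      (∀ x y, D x y ≤ K) ∧
      (∀ g h : G, D (g, 0) (h, 0) = dist g h) ∧
      (∀ p : G × ℤ, ∀ ε > (0 : ℝ), ∃ n : ℤ, D ((0 : G), n) p < ε) := by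
  haveI : Nonempty G := ⟨0⟩
  set u : ℕ → G := TopologicalSpace.denseSeq G with hu
  set a : ℕ → G := fun n => u (Nat.unpair n).1 with ha
  refine ⟨fun x y => NN a K (x - y), ?_, ?_, ?_, ?_, ?_, ?_, ?_, ?_⟩
  · exact fun x y => NN_nonneg a K hK _
  · intro x y
    constructor
    · intro h
      replace h : NN a K (x - y) = 0 := h
      have h2 : (x - y).2 = 0 := by
        by_contra hk
        have hpos := NN_pos a K hK (x - y).1 (x - y).2 hk
        rw [Prod.mk.eta] at hpos
        linarith
      have h1 : (x - y).1 = 0 := by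
        have hext := NN_ext a K hK hbdd (x - y).1
        have hxy : x - y = ((x - y).1, (0 : ℤ)) := by
          rw [← h2]
        rw [hxy] at h
        rw [h] at hext
        exact dist_eq_zero.mp hext.symm
      have : x - y = 0 := Prod.ext h1 h2
      exact sub_eq_zero.mp this
    · rintro rfl
      show NN a K (x - x) = 0
      have hs : x - x = ((0 : G), (0 : ℤ)) := by
        rw [sub_self]; rfl
      rw [hs, NN_ext a K hK hbdd]
      simp
  · intro x y
    show NN a K (x - y) = NN a K (y - x)
    rw [show x - y = -(y - x) by abel, NN_neg a K hinv]
  · intro x y z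
    show NN a K (x - z) ≤ NN a K (x - y) + NN a K (y - z)
    rw [show x - z = (x - y) + (y - z) by abel]
    exact NN_add a K hinv hK _ _
  · intro b x y
    show NN a K (b + x - (b + y)) = NN a K (x - y)
    rw [show b + x - (b + y) = x - y by abel]
  · exact fun x y => NN_le_K a K _
  · intro g h
    show NN a K ((g, (0 : ℤ)) - (h, 0)) = dist g h
    have hsub : ((g, (0 : ℤ)) - (h, 0) : G × ℤ) = (g - h, (0 : ℤ)) := rfl
    rw [hsub, NN_ext a K hK hbdd]
    have := hinv h (g - h) 0
    rw [show h + (g - h) = g by abel, add_zero] at this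
    exact this.symm
  · intro p ε hε
    have hdr := TopologicalSpace.denseRange_denseSeq G
    rw [Metric.denseRange_iff] at hdr
    obtain ⟨m0, hm0⟩ := hdr p.1 (ε / 2) (half_pos hε)
    obtain ⟨t, ht⟩ : ∃ t : ℕ, K / 2 ^ t < ε / 2 := by
      obtain ⟨t, ht⟩ := exists_pow_lt_of_lt_one (x := ε / (2 * K)) (y := (1:ℝ)/2)
        (by positivity) (by norm_num)
      refine ⟨t, ?_⟩
      have h1 : ((1:ℝ)/2) ^ t = 1 / 2 ^ t := by
        rw [div_pow, one_pow]
      rw [h1] at ht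
      have h2 : K * (1 / 2 ^ t) < K * (ε / (2 * K)) :=
        mul_lt_mul_of_pos_left ht hK
      have h3 : K * (ε / (2 * K)) = ε / 2 := by
        field_simp
      rw [mul_one_div] at h2
      linarith
    set j := Nat.pair m0 t with hj
    refine ⟨p.2 - (s j : ℤ), ?_⟩
    show NN a K (((0 : G), p.2 - (s j : ℤ)) - p) < ε
    have hsub : (((0 : G), p.2 - (s j : ℤ)) - p : G × ℤ) = (-p.1, -(s j : ℤ)) := by
      refine Prod.ext ?_ ?_
      · show (0 : G) - p.1 = -p.1
        rw [zero_sub]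
      · show p.2 - (s j : ℤ) - p.2 = -(s j : ℤ)
        ring
    rw [hsub]
    -- the one-step decomposition
    set c : ℕ → ℤ := fun i => if i = j then (-1 : ℤ) else 0 with hc
    have hTT : TT c (j + 1) = -(s j : ℤ) := by
      unfold TT
      rw [Finset.sum_eq_single_of_mem j (Finset.self_mem_range_succ j)
        (fun b _ hb => by simp [hc, hb])]
      simp [hc]
    have hPP : PP a c (j + 1) = -(a j) := by
      unfold PP
      rw [Finset.sum_eq_single_of_mem j (Finset.self_mem_range_succ j)
        (fun b _ hb => by simp [hc, hb])]
      simp [hc]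
    have hWW : WW K c (j + 1) = K / 2 ^ j := by
      unfold WW
      rw [Finset.sum_eq_single_of_mem j (Finset.self_mem_range_succ j)
        (fun b _ hb => by simp [hc, hb])]
      simp [hc]
    have hmem : dist (-p.1) (PP a c (j + 1)) + WW K c (j + 1)
        ∈ SS a K (-p.1, -(s j : ℤ)) := ⟨j + 1, c, hTT, rfl⟩
    have hle := NN_le_elem a K hK _ hmem
    have hval : dist (-p.1) (PP a c (j + 1)) + WW K c (j + 1)
        = dist p.1 (a j) + K / 2 ^ j := by
      rw [hPP, hWW, dist_neg_neg hinv]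
    have haj : a j = u m0 := by
      rw [ha]
      simp [hj, Nat.unpair_pair]
    have hKj : K / 2 ^ j ≤ K / 2 ^ t := by
      apply div_le_div_of_nonneg_left (le_of_lt hK) (by positivity)
      exact pow_le_pow_right₀ one_le_two (Nat.right_le_pair m0 t)
    have hd : dist p.1 (a j) < ε / 2 := by rw [haj]; exact hm0
    calc NN a K (-p.1, -(s j : ℤ)) ≤ dist p.1 (a j) + K / 2 ^ j := by
          rw [← hval]; exact hle
      _ < ε / 2 + ε / 2 := by
          have := lt_of_le_of_lt hKj ht
          linarith
      _ = ε := by ring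
end

section
/- Every separable abelian topological group G whose topology is induced by a bounded invariant metric d admits an isometric group embedding into a separable topological group M whose topology is induced by a bounded invariant metric, such that M is monothetic, i.e., M contains a dense cyclic subgroup (a dense subgroup generated by a single element). -/
universe u

open Finset

namespace MonoEmbedAux


variable {G : Type u} [AddCommGroup G]

noncomputable def lin (v : ℕ → G) (c : ℕ →₀ ℤ) : G := c.sum fun β n => n • v β

def coef (k : ℕ → ℕ) (c : ℕ →₀ ℤ) : ℤ := c.sum fun β n => n * (k β : ℤ)

noncomputable def cost (c : ℕ →₀ ℤ) : ℝ := c.sum fun β n => |(n : ℝ)| * (2⁻¹ : ℝ) ^ β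

@[simp] lemma lin_zero (v : ℕ → G) : lin v 0 = 0 := Finsupp.sum_zero_index
@[simp] lemma coef_zero (k : ℕ → ℕ) : coef k 0 = 0 := Finsupp.sum_zero_index
@[simp] lemma cost_zero : cost 0 = 0 := Finsupp.sum_zero_index

lemma lin_add (v : ℕ → G) (c c' : ℕ →₀ ℤ) : lin v (c + c') = lin v c + lin v c' :=
  Finsupp.sum_add_index' (fun a => zero_smul ℤ (v a)) (fun a b₁ b₂ => add_smul b₁ b₂ (v a))

lemma coef_add (k : ℕ → ℕ) (c c' : ℕ →₀ ℤ) : coef k (c + c') = coef k c + coef k c' :=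
  Finsupp.sum_add_index' (fun _ => zero_mul _) (fun _ b₁ b₂ => add_mul b₁ b₂ _)

lemma lin_neg (v : ℕ → G) (c : ℕ →₀ ℤ) : lin v (-c) = - lin v c := by
  have h := lin_add v (-c) c
  rw [neg_add_cancel, lin_zero] at h
  exact eq_neg_of_add_eq_zero_left h.symm

@[simp] lemma lin_single (v : ℕ → G) (α : ℕ) (n : ℤ) : lin v (Finsupp.single α n) = n • v α :=
  Finsupp.sum_single_index (zero_smul ℤ (v α))

@[simp] lemma coef_single (k : ℕ → ℕ) (α : ℕ) (n : ℤ) :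
    coef k (Finsupp.single α n) = n * (k α : ℤ) :=
  Finsupp.sum_single_index (zero_mul _)

@[simp] lemma cost_single (α : ℕ) (n : ℤ) :
    cost (Finsupp.single α n) = |(n : ℝ)| * (2⁻¹ : ℝ) ^ α :=
  Finsupp.sum_single_index (by simp)

lemma cost_nonneg (c : ℕ →₀ ℤ) : 0 ≤ cost c :=
  Finset.sum_nonneg fun β _ => by positivity

lemma cost_add_le (c c' : ℕ →₀ ℤ) : cost (c + c') ≤ cost c + cost c' := by
  classical
  have hs : (c + c').support ⊆ c.support ∪ c'.support := Finsupp.support_add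
  rw [cost, cost, cost,
    Finsupp.sum_of_support_subset _ hs _ (fun i _ => by simp),
    Finsupp.sum_of_support_subset c Finset.subset_union_left _ (fun i _ => by simp),
    Finsupp.sum_of_support_subset c' Finset.subset_union_right _ (fun i _ => by simp),
    ← Finset.sum_add_distrib]
  refine Finset.sum_le_sum fun β _ => ?_
  have h1 : |((c + c') β : ℝ)| ≤ |(c β : ℝ)| + |(c' β : ℝ)| := by
    rw [Finsupp.add_apply]; push_cast; exact abs_add_le _ _
  have h2 : (0:ℝ) ≤ (2⁻¹ : ℝ) ^ β := by positivity
  nlinarith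


def kseq (Kc : ℕ) : ℕ → ℕ
  | 0 => 1
  | (β + 1) => Kc * 2 ^ β * kseq Kc β

variable {Kc : ℕ}

lemma kseq_pos (hKc : 2 ≤ Kc) : ∀ β, 0 < kseq Kc β
  | 0 => Nat.one_pos
  | (β + 1) => by
      have := kseq_pos hKc β
      have h2 : 0 < 2 ^ β := Nat.pow_pos (by norm_num)
      simp only [kseq]
      positivity

lemma two_pow_le_kseq (hKc : 2 ≤ Kc) : ∀ β, 2 ^ β ≤ kseq Kc β
  | 0 => le_refl 1
  | (β + 1) => by
      have ih := two_pow_le_kseq hKc β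
      have : 2 * 2 ^ β * 1 ≤ Kc * 2 ^ β * kseq Kc β :=
        Nat.mul_le_mul (Nat.mul_le_mul hKc (le_refl _)) (kseq_pos hKc β)
      calc 2 ^ (β + 1) = 2 * 2 ^ β * 1 := by ring
      _ ≤ Kc * 2 ^ β * kseq Kc β := this
      _ = kseq Kc (β + 1) := rfl

lemma kseq_le_succ (hKc : 2 ≤ Kc) (β : ℕ) : kseq Kc β ≤ kseq Kc (β + 1) := by
  have h := kseq_pos hKc β
  have : 1 * 1 * kseq Kc β ≤ Kc * 2 ^ β * kseq Kc β :=
    Nat.mul_le_mul (Nat.mul_le_mul (by omega) Nat.one_le_two_pow) (le_refl _)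
  exact (by simpa using this : kseq Kc β ≤ Kc * 2 ^ β * kseq Kc β)

lemma kseq_mono (hKc : 2 ≤ Kc) : Monotone (kseq Kc) :=
  monotone_nat_of_le_succ (kseq_le_succ hKc)

lemma cost_ge_pow (c : ℕ →₀ ℤ) {α : ℕ} (hα : α ∈ c.support) : (2⁻¹ : ℝ) ^ α ≤ cost c := by
  have h1 : (1:ℝ) ≤ |(c α : ℝ)| := by
    have := Finsupp.mem_support_iff.mp hα
    rw [← Int.cast_abs]
    exact_mod_cast Int.one_le_abs (by omega)
  calc (2⁻¹ : ℝ) ^ α = 1 * (2⁻¹:ℝ)^α := (one_mul _).symm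
  _ ≤ |(c α : ℝ)| * (2⁻¹:ℝ)^α := by
      apply mul_le_mul_of_nonneg_right h1 (by positivity)
  _ ≤ cost c := Finset.single_le_sum (f := fun β => |(c β : ℝ)| * (2⁻¹:ℝ)^β)
      (fun β _ => by positivity) hα

/-- The master lower bound: any representation of `m` costs at least
`Kc * (k A - |m|) / k A` where `A` is the top coordinate used. -/
lemma master (hKc : 2 ≤ Kc) (c : ℕ →₀ ℤ) (hc : c ≠ 0) :
    (Kc : ℝ) * ((kseq Kc (c.support.max' (Finsupp.support_nonempty_iff.mpr hc)) : ℝ)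
        - |((coef (kseq Kc) c : ℤ) : ℝ)|)
      ≤ cost c * (kseq Kc (c.support.max' (Finsupp.support_nonempty_iff.mpr hc)) : ℝ) := by
  classical
  set k := kseq Kc with hk
  set A := c.support.max' (Finsupp.support_nonempty_iff.mpr hc) with hA
  have hAmem : A ∈ c.support := Finset.max'_mem _ _
  set m := coef k c with hm
  -- Step 1
  have hsplit : (∑ β ∈ c.support.erase A, c β * (k β : ℤ)) = m - c A * (k A : ℤ) := by
    have h0 := Finset.add_sum_erase c.support (fun β => c β * (k β : ℤ)) hAmem
    rw [hm, coef, Finsupp.sum]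
    linarith [h0]
  -- Step 2 (in ℝ)
  have hcA : (1:ℝ) ≤ |(c A : ℝ)| := by
    have := Finsupp.mem_support_iff.mp hAmem
    rw [← Int.cast_abs]
    exact_mod_cast Int.one_le_abs (by omega)
  have hkA0 : (0:ℝ) < (k A : ℝ) := by exact_mod_cast kseq_pos hKc A
  have step2 : (k A : ℝ) - |(m:ℝ)| ≤ ∑ β ∈ c.support.erase A, |(c β : ℝ)| * (k β : ℝ) := by
    have habs : |((m - c A * (k A : ℤ) : ℤ) : ℝ)|
        ≤ ∑ β ∈ c.support.erase A, |(c β : ℝ)| * (k β : ℝ) := by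
      rw [← hsplit]
      push_cast
      refine (Finset.abs_sum_le_sum_abs _ _).trans ?_
      refine Finset.sum_le_sum fun β _ => le_of_eq ?_
      rw [abs_mul, abs_of_nonneg (show (0:ℝ) ≤ (k β : ℝ) by positivity)]
    have h1 : (k A : ℝ) ≤ |(c A : ℝ)| * (k A : ℝ) := by
      nlinarith
    have h2 : |(c A : ℝ) * (k A : ℝ)| - |(m:ℝ)| ≤ |((m - c A * (k A : ℤ) : ℤ) : ℝ)| := by
      push_cast
      have := abs_sub_abs_le_abs_sub ((c A : ℝ) * (k A : ℝ)) (m:ℝ)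
      have h3 : |(c A : ℝ) * (k A : ℝ) - (m:ℝ)| = |(m:ℝ) - (c A : ℝ) * (k A : ℝ)| :=
        abs_sub_comm _ _
      linarith
    have h4 : |(c A : ℝ) * (k A : ℝ)| = |(c A : ℝ)| * (k A : ℝ) := by
      rw [abs_mul, abs_of_pos hkA0]
    linarith
  -- Step 3
  have step3 : ∀ β ∈ c.support.erase A, (Kc : ℝ) * (k β : ℝ) ≤ (k A : ℝ) * (2⁻¹:ℝ) ^ β := by
    intro β hβ
    have hβA : β + 1 ≤ A := by
      have h1 := Finset.le_max' c.support β (Finset.mem_of_mem_erase hβ)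
      have h2 : β ≠ A := Finset.ne_of_mem_erase hβ
      omega
    have hle : Kc * 2 ^ β * k β ≤ k A := by
      have : kseq Kc (β + 1) ≤ kseq Kc A := kseq_mono hKc hβA
      simpa [hk, kseq] using this
    have hle' : (Kc : ℝ) * 2 ^ β * (k β : ℝ) ≤ (k A : ℝ) := by exact_mod_cast hle
    have h2 : (0:ℝ) < (2:ℝ)^β := by positivity
    rw [inv_pow, ← div_eq_mul_inv, le_div_iff₀ h2]
    nlinarith
  -- Step 4
  have step4 : (Kc:ℝ) * ((k A : ℝ) - |(m:ℝ)|)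
      ≤ (∑ β ∈ c.support.erase A, |(c β : ℝ)| * (2⁻¹:ℝ) ^ β) * (k A : ℝ) := by
    calc (Kc:ℝ) * ((k A : ℝ) - |(m:ℝ)|)
        ≤ (Kc:ℝ) * ∑ β ∈ c.support.erase A, |(c β : ℝ)| * (k β : ℝ) := by
          apply mul_le_mul_of_nonneg_left step2 (by positivity)
      _ = ∑ β ∈ c.support.erase A, |(c β : ℝ)| * ((Kc:ℝ) * (k β : ℝ)) := by
          rw [Finset.mul_sum]; apply Finset.sum_congr rfl; intros; ring
      _ ≤ ∑ β ∈ c.support.erase A, |(c β : ℝ)| * ((k A : ℝ) * (2⁻¹:ℝ)^β) := by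
          refine Finset.sum_le_sum fun β hβ => ?_
          exact mul_le_mul_of_nonneg_left (step3 β hβ) (abs_nonneg _)
      _ = (∑ β ∈ c.support.erase A, |(c β : ℝ)| * (2⁻¹:ℝ) ^ β) * (k A : ℝ) := by
          rw [Finset.sum_mul]; apply Finset.sum_congr rfl; intros; ring
  have hsub : (∑ β ∈ c.support.erase A, |(c β : ℝ)| * (2⁻¹:ℝ) ^ β) ≤ cost c := by
    apply Finset.sum_le_sum_of_subset_of_nonneg (Finset.erase_subset _ _)
    intros; positivity
  calc (Kc : ℝ) * ((k A:ℝ) - |(m:ℝ)|)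
      ≤ (∑ β ∈ c.support.erase A, |(c β : ℝ)| * (2⁻¹:ℝ) ^ β) * (k A : ℝ) := step4
    _ ≤ cost c * (k A : ℝ) := mul_le_mul_of_nonneg_right hsub (le_of_lt hkA0)


lemma cost_coef_zero (hKc : 2 ≤ Kc) {c : ℕ →₀ ℤ} (hc : c ≠ 0)
    (h : coef (kseq Kc) c = 0) : (Kc : ℝ) ≤ cost c := by
  have hM := master hKc c hc
  set A := c.support.max' (Finsupp.support_nonempty_iff.mpr hc)
  have hkA0 : (0:ℝ) < (kseq Kc A : ℝ) := by exact_mod_cast kseq_pos hKc A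
  rw [h] at hM
  simp only [Int.cast_zero, abs_zero, sub_zero] at hM
  exact le_of_mul_le_mul_right hM hkA0

lemma cost_coef_ne (hKc : 2 ≤ Kc) {c : ℕ →₀ ℤ} {m : ℤ} (hm : m ≠ 0)
    (h : coef (kseq Kc) c = m) : (2⁻¹ : ℝ) ^ (2 * m.natAbs) ≤ cost c := by
  have hc : c ≠ 0 := by
    rintro rfl
    exact hm (h.symm.trans Finsupp.sum_zero_index)
  set A := c.support.max' (Finsupp.support_nonempty_iff.mpr hc) with hA
  have hAmem : A ∈ c.support := Finset.max'_mem _ _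
  by_cases hcase : 2 * m.natAbs ≤ kseq Kc A
  · -- big top coordinate: cost ≥ Kc/2 ≥ 1
    have hM := master hKc c hc
    rw [h] at hM
    have hkA0 : (0:ℝ) < (kseq Kc A : ℝ) := by exact_mod_cast kseq_pos hKc A
    have habs : |((m:ℤ):ℝ)| = (m.natAbs : ℝ) := by
      simp [Nat.cast_natAbs]
    have h2 : 2 * (m.natAbs : ℝ) ≤ (kseq Kc A : ℝ) := by exact_mod_cast hcase
    have hKc2 : (2:ℝ) ≤ (Kc:ℝ) := by exact_mod_cast hKc
    have hone : (1:ℝ) ≤ cost c := by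
      rw [habs] at hM
      nlinarith
    calc (2⁻¹:ℝ) ^ (2 * m.natAbs) ≤ 1 := by
          apply pow_le_one₀ (by norm_num) (by norm_num)
    _ ≤ cost c := hone
  · -- small top coordinate: A < 2 * |m|
    push_neg at hcase
    have hA2 : A ≤ 2 * m.natAbs := by
      have := two_pow_le_kseq hKc A
      have h2A : A < 2 ^ A := Nat.lt_two_pow_self
      omega
    calc (2⁻¹:ℝ) ^ (2 * m.natAbs) ≤ (2⁻¹:ℝ) ^ A :=
          pow_le_pow_of_le_one (by norm_num) (by norm_num) hA2
    _ ≤ cost c := cost_ge_pow c hAmem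


/-! ### Invariant-metric norm lemmas -/

variable {G : Type u} [AddCommGroup G] [MetricSpace G]

section NormLemmas

lemma nd_eq (hinv : ∀ a x y : G, dist (a + x) (a + y) = dist x y) (a b : G) : dist a b = dist (a - b) 0 := by
  have h := hinv b (a - b) 0
  rw [add_sub_cancel, add_zero] at h
  exact h

lemma nd_neg (hinv : ∀ a x y : G, dist (a + x) (a + y) = dist x y) (a : G) : dist (-a) 0 = dist a 0 := by
  have h := hinv a (-a) 0
  rw [add_neg_cancel, add_zero] at h
  rw [← h, dist_comm]

lemma nd_add_le (hinv : ∀ a x y : G, dist (a + x) (a + y) = dist x y) (a b : G) : dist (a + b) 0 ≤ dist a 0 + dist b 0 := by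
  have h := hinv b a 0
  rw [add_zero] at h
  calc dist (a + b) 0 ≤ dist (a + b) b + dist b 0 := dist_triangle _ _ _
  _ = dist a 0 + dist b 0 := by rw [add_comm a b, h]

end NormLemmas

/-! ### The set of representations and the norm `rho` -/

section Rho
variable {G : Type u} [AddCommGroup G] [MetricSpace G]
variable (u : ℕ → G) (k : ℕ → ℕ) (K : ℝ)

def SS (x : G × ℤ) : Set ℝ :=
  {r | ∃ c : ℕ →₀ ℤ, coef k c = x.2 ∧ r = dist (x.1 - lin u c) 0 + cost c}

noncomputable def rho (x : G × ℤ) : ℝ := sInf ({K} ∪ SS u k x)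

variable {u k K}

lemma SS_nonneg (hK : 0 < K) (x : G × ℤ) : ∀ r ∈ ({K} ∪ SS u k x), 0 ≤ r := by
  rintro r (rfl | ⟨c, hc, rfl⟩)
  · exact hK.le
  · have := cost_nonneg c
    have := dist_nonneg (x := x.1 - lin u c) (y := 0)
    linarith

lemma SS_bddBelow (hK : 0 < K) (x : G × ℤ) : BddBelow ({K} ∪ SS u k x) :=
  ⟨0, fun r hr => SS_nonneg hK x r hr⟩

lemma SS_union_nonempty (x : G × ℤ) : ({K} ∪ SS u k x).Nonempty :=
  ⟨K, Or.inl rfl⟩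

lemma rho_le_K (hK : 0 < K) (x : G × ℤ) : rho u k K x ≤ K :=
  csInf_le (SS_bddBelow hK x) (Or.inl rfl)

lemma rho_nonneg (hK : 0 < K) (x : G × ℤ) : 0 ≤ rho u k K x :=
  le_csInf (SS_union_nonempty x) (SS_nonneg hK x)

lemma rho_le_of_rep (hK : 0 < K) {x : G × ℤ} (c : ℕ →₀ ℤ) (hc : coef k c = x.2) :
    rho u k K x ≤ dist (x.1 - lin u c) 0 + cost c :=
  csInf_le (SS_bddBelow hK x) (Or.inr ⟨c, hc, rfl⟩)

lemma rho_zero (hK : 0 < K) : rho u k K (0 : G × ℤ) = 0 := by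
  have h1 := rho_le_of_rep (u := u) (k := k) hK (x := (0 : G × ℤ)) 0 (by simp [coef_zero])
  simp only [lin_zero, cost_zero, Prod.fst_zero, sub_zero, dist_self, add_zero] at h1
  exact le_antisymm h1 (rho_nonneg hK 0)

lemma rho_add_le (hinv : ∀ a x y : G, dist (a + x) (a + y) = dist x y)
    (hK : 0 < K) (x y : G × ℤ) :
    rho u k K (x + y) ≤ rho u k K x + rho u k K y := by
  refine le_of_forall_pos_le_add fun ε hε => ?_
  obtain ⟨a, ha, hax⟩ := exists_lt_of_csInf_lt (SS_union_nonempty x)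
    (show rho u k K x < rho u k K x + ε / 2 by linarith)
  obtain ⟨b, hb, hby⟩ := exists_lt_of_csInf_lt (SS_union_nonempty y)
    (show rho u k K y < rho u k K y + ε / 2 by linarith)
  have key : rho u k K (x + y) ≤ a + b := by
    rcases ha with rfl | ⟨c, hc, rfl⟩
    · have h0 := rho_le_K (u := u) (k := k) hK (x + y)
      have h1 := SS_nonneg hK y b hb
      linarith
    rcases hb with rfl | ⟨c', hc', rfl⟩
    · have h0 := rho_le_K (u := u) (k := k) hK (x + y)
      have h1 : (0:ℝ) ≤ dist (x.1 - lin u c) 0 + cost c := by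
        have := cost_nonneg c
        have := dist_nonneg (x := x.1 - lin u c) (y := 0)
        linarith
      linarith
    · have hcoef : coef k (c + c') = (x + y).2 := by
        rw [coef_add, hc, hc']; rfl
      have h1 := rho_le_of_rep (u := u) hK (c + c') hcoef
      have heq : (x + y).1 - lin u (c + c') = (x.1 - lin u c) + (y.1 - lin u c') := by
        rw [lin_add]
        show x.1 + y.1 - _ = _
        abel
      have h2 : dist ((x + y).1 - lin u (c + c')) 0
          ≤ dist (x.1 - lin u c) 0 + dist (y.1 - lin u c') 0 := by
        rw [heq]; exact nd_add_le hinv _ _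
      have h3 := cost_add_le c c'
      linarith
  linarith

lemma cost_neg (c : ℕ →₀ ℤ) : cost (-c) = cost c := by
  rw [cost, cost, Finsupp.sum, Finsupp.sum, Finsupp.support_neg]
  exact Finset.sum_congr rfl fun β _ => by simp

lemma coef_neg (c : ℕ →₀ ℤ) : coef k (-c) = - coef k c := by
  have h := coef_add k (-c) c
  rw [neg_add_cancel, coef_zero] at h
  exact eq_neg_of_add_eq_zero_left h.symm

lemma SS_neg_subset (hinv : ∀ a x y : G, dist (a + x) (a + y) = dist x y) (x : G × ℤ) :
    SS u k x ⊆ SS u k (-x) := by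
  rintro r ⟨c, hc, rfl⟩
  refine ⟨-c, by rw [coef_neg, hc]; rfl, ?_⟩
  rw [lin_neg, cost_neg]
  congr 1
  have heq : (-x).1 - -lin u c = -(x.1 - lin u c) := by
    show -x.1 - _ = _
    abel
  rw [heq, nd_neg hinv]

lemma rho_neg (hinv : ∀ a x y : G, dist (a + x) (a + y) = dist x y) (x : G × ℤ) :
    rho u k K (-x) = rho u k K x := by
  have hset : SS u k (-x) = SS u k x := by
    refine Set.Subset.antisymm ?_ (SS_neg_subset hinv x)
    have := SS_neg_subset (u := u) (k := k) hinv (-x)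
    rwa [neg_neg] at this
  rw [rho, rho, hset]

end Rho

/-! ### Properties of `rho` for the special sequence `kseq` -/

section RhoK
variable {G : Type u} [AddCommGroup G] [MetricSpace G]
variable {u : ℕ → G} {Kc : ℕ} {K : ℝ}

lemma rho_fst (hK : 0 < K) (hKc : 2 ≤ Kc) (hKge : K ≤ (Kc : ℝ))
    (hbddg : ∀ g : G, dist g 0 ≤ K) (g : G) :
    rho u (kseq Kc) K (g, (0 : ℤ)) = dist g 0 := by
  have hle : rho u (kseq Kc) K (g, (0:ℤ)) ≤ dist g 0 := by
    have := rho_le_of_rep (u := u) (k := kseq Kc) hK (x := (g, (0:ℤ))) 0 (by simp [coef_zero])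
    simpa [lin_zero, cost_zero] using this
  refine le_antisymm hle (le_csInf (SS_union_nonempty _) ?_)
  rintro r (rfl | ⟨c, hc, rfl⟩)
  · exact hbddg g
  · by_cases hc0 : c = 0
    · subst hc0; simp [lin_zero, cost_zero]
    · have h1 : (Kc : ℝ) ≤ cost c := cost_coef_zero hKc hc0 hc
      have h2 : dist g 0 ≤ K := hbddg g
      have := dist_nonneg (x := (g, (0:ℤ)).1 - lin u c) (y := 0)
      linarith

lemma rho_pos (hK : 0 < K) (hKc : 2 ≤ Kc) (hKge : K ≤ (Kc : ℝ))
    {x : G × ℤ} (hx : x ≠ 0) : 0 < rho u (kseq Kc) K x := by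
  rcases eq_or_ne x.2 0 with h2 | h2
  · -- second coordinate zero, so first coordinate nonzero
    have h1 : x.1 ≠ 0 := by
      intro h1
      exact hx (Prod.ext h1 h2)
    have hd : 0 < dist x.1 0 := dist_pos.mpr h1
    refine lt_of_lt_of_le (show 0 < min K (dist x.1 0) by positivity) ?_
    refine le_csInf (SS_union_nonempty _) ?_
    rintro r (rfl | ⟨c, hc, rfl⟩)
    · exact min_le_left _ _
    · by_cases hc0 : c = 0
      · subst hc0
        simp only [lin_zero, cost_zero, sub_zero, add_zero]
        exact min_le_right _ _
      · have h3 : (Kc : ℝ) ≤ cost c := cost_coef_zero hKc hc0 (by rw [hc, h2])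
        have := dist_nonneg (x := x.1 - lin u c) (y := 0)
        have : min K (dist x.1 0) ≤ K := min_le_left _ _
        linarith
  · -- second coordinate nonzero
    refine lt_of_lt_of_le (show 0 < min K ((2⁻¹:ℝ) ^ (2 * x.2.natAbs)) by positivity) ?_
    refine le_csInf (SS_union_nonempty _) ?_
    rintro r (rfl | ⟨c, hc, rfl⟩)
    · exact min_le_left _ _
    · have h3 : (2⁻¹:ℝ) ^ (2 * x.2.natAbs) ≤ cost c := cost_coef_ne hKc h2 hc
      have := dist_nonneg (x := x.1 - lin u c) (y := 0)
      have : min K ((2⁻¹:ℝ) ^ (2 * x.2.natAbs)) ≤ (2⁻¹:ℝ) ^ (2 * x.2.natAbs) :=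
        min_le_right _ _
      linarith

lemma rho_single_le (hK : 0 < K) (h : G) (α : ℕ) :
    rho u (kseq Kc) K (h, (kseq Kc α : ℤ)) ≤ dist (h - u α) 0 + (2⁻¹:ℝ) ^ α := by
  have hc : coef (kseq Kc) (Finsupp.single α 1) = ((h, (kseq Kc α : ℤ)) : G × ℤ).2 := by
    rw [coef_single]; simp
  have := rho_le_of_rep (u := u) hK (Finsupp.single α 1) hc
  simpa [lin_single, cost_single, one_smul] using this

end RhoK


end MonoEmbedAux

open MonoEmbedAux in
/-- Every separable abelian group with a bounded invariant metric
(inducing its topology) embeds isometrically, as a group, into a separable monothetic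
group with a bounded invariant metric. -/
theorem embeds_into_monothetic_bounded_metric_group
    (G : Type u) [AddCommGroup G] [MetricSpace G] [TopologicalSpace.SeparableSpace G]
    (K : ℝ) (hK : 0 < K)
    (hinv : ∀ a x y : G, dist (a + x) (a + y) = dist x y)
    (hbdd : ∀ x y : G, dist x y ≤ K) :
    ∃ (M : Type u) (_ : AddCommGroup M) (_ : MetricSpace M),
      (∀ a x y : M, dist (a + x) (a + y) = dist x y) ∧
      (∃ K' > (0 : ℝ), ∀ x y : M, dist x y ≤ K') ∧
      TopologicalSpace.SeparableSpace M ∧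
      (∃ c : M, Dense (AddSubgroup.zmultiples c : Set M)) ∧
      ∃ φ : G →+ M, Function.Injective φ ∧ ∀ x y : G, dist (φ x) (φ y) = dist x y := by
  classical
  haveI : Nonempty G := ⟨0⟩
  -- the dense sequence, each value hit for infinitely many indices
  set v : ℕ → G := TopologicalSpace.denseSeq G with hv
  have hvd : DenseRange v := TopologicalSpace.denseRange_denseSeq G
  set u : ℕ → G := fun α => v (Nat.unpair α).1 with hu
  -- the constant
  set Kc : ℕ := ⌈K⌉₊ + 1 with hKcdef
  have hKc : 2 ≤ Kc := by
    have : 0 < ⌈K⌉₊ := Nat.ceil_pos.mpr hK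
    omega
  have hKge : K ≤ (Kc : ℝ) := by
    have h1 := Nat.le_ceil K
    have h2 : ((⌈K⌉₊ : ℝ)) ≤ (Kc : ℝ) := by exact_mod_cast Nat.le_succ _
    linarith
  set k : ℕ → ℕ := kseq Kc with hkdef
  have hbddg : ∀ g : G, dist g 0 ≤ K := fun g => hbdd g 0
  -- the metric space structure on G × ℤ
  set MS : MetricSpace (G × ℤ) :=
    { dist := fun x y => rho u k K (x - y)
      dist_self := fun x => by simpa using rho_zero (u := u) (k := k) hK
      dist_comm := fun x y => by
        have := rho_neg (u := u) (k := k) (K := K) hinv (x - y)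
        simpa [neg_sub] using this.symm
      dist_triangle := fun x y z => by
        have := rho_add_le (u := u) (k := k) (K := K) hinv hK (x - y) (y - z)
        simpa [sub_add_sub_cancel] using this
      eq_of_dist_eq_zero := by
        intro x y hxy
        by_contra hne
        have hsub : x - y ≠ 0 := sub_ne_zero.mpr hne
        have hpos := rho_pos (u := u) (Kc := Kc) hK hKc hKge hsub
        have h0 : rho u (kseq Kc) K (x - y) = 0 := hxy
        exact absurd h0 (ne_of_gt hpos) } with hMS
  set c0 : G × ℤ := ((0 : G), (1 : ℤ)) with hc0
  have hdense : @Dense (G × ℤ) (MS.toPseudoMetricSpace.toUniformSpace.toTopologicalSpace)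
      (AddSubgroup.zmultiples c0 : Set (G × ℤ)) := by
    rw [@Metric.dense_iff (G × ℤ) MS.toPseudoMetricSpace]
    intro x r hr
    obtain ⟨i, hi⟩ := Metric.denseRange_iff.mp hvd (-x.1) (r / 2) (by linarith)
    obtain ⟨j, hj⟩ := exists_pow_lt_of_lt_one (show (0:ℝ) < r / 2 by linarith)
      (show (2⁻¹ : ℝ) < 1 by norm_num)
    set α : ℕ := Nat.pair i j with hα
    have huα : u α = v i := by simp [hu, hα, Nat.unpair_pair]
    set n : ℤ := x.2 + (k α : ℤ) with hn
    refine ⟨n • c0, ?_, ?_⟩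
    · rw [@Metric.mem_ball (G × ℤ) MS.toPseudoMetricSpace]
      have hkey : n • c0 - x = ((-x.1 : G), ((k α : ℕ) : ℤ)) := by
        refine Prod.ext ?_ ?_
        · show n • (0:G) - x.1 = -x.1
          rw [smul_zero, zero_sub]
        · show n • (1:ℤ) - x.2 = (k α : ℤ)
          rw [smul_eq_mul, mul_one, hn]
          ring
      show rho u k K (n • c0 - x) < r
      rw [hkey]
      have h2 := rho_single_le (u := u) (Kc := Kc) hK (-x.1) α
      have h3 : dist (-x.1 - u α) 0 = dist (-x.1) (v i) := by
        rw [← nd_eq hinv, huα]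
      have h4 : (2⁻¹ : ℝ) ^ α ≤ (2⁻¹ : ℝ) ^ j :=
        pow_le_pow_of_le_one (by norm_num) (by norm_num) (Nat.right_le_pair i j)
      calc rho u k K ((-x.1 : G), ((k α : ℕ) : ℤ))
          ≤ dist (-x.1 - u α) 0 + (2⁻¹:ℝ) ^ α := h2
        _ < r / 2 + r / 2 := by rw [h3]; exact add_lt_add (hi) (lt_of_le_of_lt h4 hj)
        _ = r := by ring
    · exact AddSubgroup.mem_zmultiples_iff.mpr ⟨n, rfl⟩
  have hcount : (AddSubgroup.zmultiples c0 : Set (G × ℤ)).Countable := by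
    have hr : (AddSubgroup.zmultiples c0 : Set (G × ℤ)) = Set.range (fun n : ℤ => n • c0) := by
      ext w
      simp [AddSubgroup.mem_zmultiples_iff, Set.mem_range]
    rw [hr]
    exact Set.countable_range _
  refine ⟨G × ℤ, inferInstance, MS, ?_, ?_, ?_, ?_, ?_⟩
  · -- invariance
    intro a x y
    show rho u k K (a + x - (a + y)) = rho u k K (x - y)
    congr 1
    abel
  · -- boundedness
    exact ⟨K, hK, fun x y => rho_le_K hK _⟩
  · -- separability
    exact @TopologicalSpace.SeparableSpace.mk (G × ℤ)
      (MS.toPseudoMetricSpace.toUniformSpace.toTopologicalSpace)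
      ⟨(AddSubgroup.zmultiples c0 : Set (G × ℤ)), hcount, hdense⟩
  · -- monothetic
    exact ⟨c0, hdense⟩
  · -- the embedding
    refine ⟨AddMonoidHom.inl G ℤ, fun a b hab => by simpa using congrArg Prod.fst hab, ?_⟩
    intro x y
    show rho u k K ((x, (0:ℤ)) - (y, (0:ℤ))) = dist x y
    have h1 : ((x, (0:ℤ)) : G × ℤ) - (y, (0:ℤ)) = (x - y, (0:ℤ)) := by
      simp
    rw [h1, rho_fst hK hKc hKge hbddg, ← nd_eq hinv]
end

section
/- Let G be a separable abelian topological group and let d be an invariant pseudometric on G bounded by 1 that is continuous with respect to the topology of G. Then there exists an invariant pseudometric D on the product group G × ℤ such that: (1) D is bounded by 1; (2) D((g,0),(h,0)) = d(g,h) for all g,h ∈ G; and (3) for every g in a fixed countable dense subgroup of G and every ε > 0 there exists n ∈ ℤ with D((0,n),(g,0)) ≤ ε, i.e., the cyclic subgroup {(0,n) : n ∈ ℤ} is dense in G × {0} with respect to the pseudometric D. -/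
private lemma aux_lists {α : Type*} {s : Set α} (hs : s.Countable) :
    {l : List α | ∀ x ∈ l, x ∈ s}.Countable := by
  have := hs.to_subtype
  have h : Set.Countable (Set.range fun l : List s => l.map Subtype.val) :=
    Set.countable_range _
  refine h.mono ?_
  intro l hl
  exact ⟨l.attach.map fun x => ⟨x.1, hl x.1 x.2⟩, by simp [List.map_map]⟩

private lemma aux_closure_countable {G : Type*} [AddCommGroup G] {s : Set G} (hs : s.Countable) :
    ((AddSubgroup.closure s : AddSubgroup G) : Set G).Countable := by
  have h1 : ((AddSubgroup.closure s : AddSubgroup G) : Set G)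
      = ((AddSubmonoid.closure (s ∪ -s) : AddSubmonoid G) : Set G) := by
    rw [← AddSubgroup.closure_toAddSubmonoid]; rfl
  have hneg : (-s : Set G).Countable := by
    refine (hs.image fun x => -x).mono ?_
    intro x hx
    exact ⟨-x, hx, by simp⟩
  rw [h1, AddSubmonoid.closure_eq_image_sum]
  exact (aux_lists (hs.union hneg)).image _

open Finset

private def auxNN (k : ℕ) : ℤ := 2 ^ (k * k)

private lemma auxNN_pos (k : ℕ) : 0 < auxNN k := pow_pos two_pos _

private lemma auxNN_mono {j k : ℕ} (h : j ≤ k) : auxNN j ≤ auxNN k :=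
  pow_le_pow_right₀ one_le_two (Nat.mul_le_mul h h)

section RepLemmas

variable {G : Type*} [AddCommGroup G]

private def auxRep (d : G → G → ℝ) (seq : ℕ → G) (x : G) (n : ℤ) : Set ℝ :=
  { r | ∃ K : ℕ, ∃ c : ℕ → ℤ,
      (∑ k ∈ Finset.range K, c k * auxNN k) = n ∧
      r = d 0 (x + ∑ k ∈ Finset.range K, c k • seq k)
          + ∑ k ∈ Finset.range K, (|c k| : ℝ) * (1 / 2 : ℝ) ^ k }

variable (d : G → G → ℝ) (seq : ℕ → G)

private lemma auxRep_nonempty (x : G) (n : ℤ) : (auxRep d seq x n).Nonempty := by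
  refine ⟨_, 1, fun _ => n, ?_, rfl⟩
  simp [auxNN]

private lemma auxRep_nonneg (hnonneg : ∀ x y, 0 ≤ d x y) (x : G) (n : ℤ) :
    ∀ r ∈ auxRep d seq x n, 0 ≤ r := by
  rintro r ⟨K, c, -, rfl⟩
  have h1 : (0:ℝ) ≤ ∑ k ∈ Finset.range K, (|c k| : ℝ) * (1 / 2 : ℝ) ^ k :=
    Finset.sum_nonneg fun k _ => by positivity
  have := hnonneg 0 (x + ∑ k ∈ Finset.range K, c k • seq k)
  linarith

private lemma auxRep_bddBelow (hnonneg : ∀ x y, 0 ≤ d x y) (x : G) (n : ℤ) :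
    BddBelow (auxRep d seq x n) :=
  ⟨0, fun r hr => auxRep_nonneg d seq hnonneg x n r hr⟩

private lemma auxTrunc {M : Type*} [AddCommMonoid M] (f : ℕ → ℤ → M)
    (hf : ∀ k, f k 0 = 0) {K K' : ℕ} (h : K ≤ K') (c : ℕ → ℤ) :
    ∑ k ∈ Finset.range K', f k (if k < K then c k else 0)
      = ∑ k ∈ Finset.range K, f k (c k) := by
  rw [← Finset.sum_subset (Finset.range_subset_range.2 h)
    (fun k _ hk => by
      have : ¬ k < K := fun hc => hk (Finset.mem_range.2 hc)
      simp [this, hf])]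
  exact Finset.sum_congr rfl fun k hk => by
    have : k < K := Finset.mem_range.1 hk
    simp [this]

private lemma auxCore (K : ℕ) (c : ℕ → ℤ)
    (h0 : ∑ k ∈ Finset.range K, c k * auxNN k = 0)
    (hne : ∃ k, k < K ∧ c k ≠ 0) :
    (1 : ℝ) ≤ ∑ k ∈ Finset.range K, (|c k| : ℝ) * (1 / 2 : ℝ) ^ k := by
  classical
  set F := (Finset.range K).filter fun k => c k ≠ 0 with hF
  have hFne : F.Nonempty := by
    obtain ⟨k, hk, hck⟩ := hne
    exact ⟨k, by simp [hF, Finset.mem_filter, Finset.mem_range, hk, hck]⟩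
  set M := F.max' hFne with hMdef
  have hMF : M ∈ F := F.max'_mem hFne
  have hMK : M < K := Finset.mem_range.1 (Finset.mem_filter.1 hMF).1
  have hcM : c M ≠ 0 := (Finset.mem_filter.1 hMF).2
  have hzero : ∀ k, M < k → k < K → c k = 0 := by
    intro k hMk hkK
    by_contra hc
    exact absurd (F.le_max' k (Finset.mem_filter.2 ⟨Finset.mem_range.2 hkK, hc⟩))
      (by omega)
  have hsum1 : ∑ k ∈ Finset.range (M + 1), c k * auxNN k = 0 := by
    rw [← h0]
    refine Finset.sum_subset (Finset.range_subset_range.2 hMK) ?_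
    intro k hk hk'
    have : c k = 0 := hzero k (by simp only [Finset.mem_range] at hk hk'; omega)
      (Finset.mem_range.1 hk)
    simp [this]
  obtain ⟨m, hm⟩ : ∃ m, M = m + 1 := by
    rcases Nat.eq_zero_or_pos M with h | h
    · exfalso
      rw [h] at hsum1
      simp [auxNN] at hsum1
      rw [h] at hcM
      exact hcM hsum1
    · exact ⟨M - 1, by omega⟩
  have hsplit : c M * auxNN M = -∑ k ∈ Finset.range M, c k * auxNN k := by
    have h2 := Finset.sum_range_succ (fun k => c k * auxNN k) M
    rw [hsum1] at h2
    linarith [h2]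
  have habs : auxNN M ≤ ∑ k ∈ Finset.range M, |c k| * auxNN k := by
    calc auxNN M ≤ |c M| * auxNN M := by
          nlinarith [auxNN_pos M, Int.one_le_abs hcM]
      _ = |c M * auxNN M| := by
          rw [abs_mul, abs_of_pos (auxNN_pos M)]
      _ = |∑ k ∈ Finset.range M, c k * auxNN k| := by rw [hsplit, abs_neg]
      _ ≤ ∑ k ∈ Finset.range M, |c k * auxNN k| := Finset.abs_sum_le_sum_abs _ _
      _ = ∑ k ∈ Finset.range M, |c k| * auxNN k := by
          refine Finset.sum_congr rfl fun k _ => ?_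
          rw [abs_mul, abs_of_pos (auxNN_pos k)]
  have hstep : ∑ k ∈ Finset.range M, |c k| * auxNN k
      ≤ (∑ k ∈ Finset.range M, |c k|) * auxNN m := by
    rw [Finset.sum_mul]
    refine Finset.sum_le_sum fun k hk => ?_
    have hk' : k ≤ m := by have := Finset.mem_range.1 hk; omega
    exact mul_le_mul_of_nonneg_left (auxNN_mono hk') (abs_nonneg _)
  set s : ℤ := ∑ k ∈ Finset.range M, |c k| with hs
  have hkey : (2 : ℤ) ^ m ≤ s := by
    have h1 : auxNN M ≤ s * auxNN m := le_trans habs hstep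
    have h2 : auxNN M = auxNN m * 2 ^ m * 2 ^ m * 2 := by
      rw [hm]
      simp only [auxNN]
      rw [show (m + 1) * (m + 1) = m * m + m + m + 1 by ring]
      rw [pow_add, pow_add, pow_add]
      ring
    have hp : (1 : ℤ) ≤ 2 ^ m := one_le_pow₀ (by norm_num)
    have h3 : auxNN m * (2 ^ m * 2 ^ m * 2) ≤ auxNN m * s := by nlinarith
    have h4 : (2:ℤ) ^ m * 2 ^ m * 2 ≤ s := le_of_mul_le_mul_left h3 (auxNN_pos m)
    nlinarith
  calc (1 : ℝ) = (2 : ℝ) ^ m * (1 / 2 : ℝ) ^ m := by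
        rw [← mul_pow]; norm_num
    _ ≤ (s : ℝ) * (1 / 2 : ℝ) ^ m := by
        refine mul_le_mul_of_nonneg_right ?_ (by positivity)
        exact_mod_cast hkey
    _ = ∑ k ∈ Finset.range M, (|c k| : ℝ) * (1 / 2 : ℝ) ^ m := by
        rw [← Finset.sum_mul]; push_cast [hs]; ring
    _ ≤ ∑ k ∈ Finset.range M, (|c k| : ℝ) * (1 / 2 : ℝ) ^ k := by
        refine Finset.sum_le_sum fun k hk => ?_
        refine mul_le_mul_of_nonneg_left ?_ (by positivity)
        refine pow_le_pow_of_le_one (by norm_num) (by norm_num) ?_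
        have := Finset.mem_range.1 hk; omega
    _ ≤ ∑ k ∈ Finset.range K, (|c k| : ℝ) * (1 / 2 : ℝ) ^ k := by
        refine Finset.sum_le_sum_of_subset_of_nonneg
          (Finset.range_subset_range.2 (le_of_lt hMK)) fun k _ _ => by positivity

private lemma auxRep_sInf_zero (hnonneg : ∀ x y, 0 ≤ d x y)
    (hbdd : ∀ x y, d x y ≤ 1) (x : G) :
    sInf (auxRep d seq x 0) = d 0 x := by
  refine le_antisymm ?_ ?_
  · refine csInf_le (auxRep_bddBelow d seq hnonneg x 0) ?_
    exact ⟨0, fun _ => 0, by simp, by simp⟩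
  · refine le_csInf (auxRep_nonempty d seq x 0) ?_
    rintro r ⟨K, c, hw, rfl⟩
    by_cases hall : ∀ k, k < K → c k = 0
    · have hA : ∑ k ∈ Finset.range K, c k • seq k = 0 :=
        Finset.sum_eq_zero fun k hk => by
          rw [hall k (Finset.mem_range.1 hk), zero_smul]
      have hB : ∑ k ∈ Finset.range K, (|c k| : ℝ) * (1 / 2 : ℝ) ^ k = 0 :=
        Finset.sum_eq_zero fun k hk => by
          rw [hall k (Finset.mem_range.1 hk)]; simp
      rw [hA, hB, add_zero, add_zero]
    · push_neg at hall
      have h1 : (1:ℝ) ≤ ∑ k ∈ Finset.range K, (|c k| : ℝ) * (1 / 2 : ℝ) ^ k :=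
        auxCore K c hw hall
      have h2 := hnonneg 0 (x + ∑ k ∈ Finset.range K, c k • seq k)
      have h3 := hbdd 0 x
      linarith

private lemma aux_d0add (hsymm : ∀ x y, d x y = d y x)
    (htri : ∀ x y z, d x z ≤ d x y + d y z)
    (hinv : ∀ a x y, d (a + x) (a + y) = d x y) (u v : G) :
    d 0 (u + v) ≤ d 0 u + d 0 v := by
  have h1 := htri 0 u (u + v)
  have h2 : d u (u + v) = d 0 v := by
    have := hinv u 0 v
    simpa using this
  linarith

private lemma aux_d0neg (hsymm : ∀ x y, d x y = d y x)
    (hinv : ∀ a x y, d (a + x) (a + y) = d x y) (u : G) :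
    d 0 (-u) = d 0 u := by
  have := hinv u 0 (-u)
  simp at this
  rw [← this, hsymm]

private lemma auxRep_neg_subset (hsymm : ∀ x y, d x y = d y x)
    (hinv : ∀ a x y, d (a + x) (a + y) = d x y) (x : G) (n : ℤ) :
    auxRep d seq x n ⊆ auxRep d seq (-x) (-n) := by
  rintro r ⟨K, c, hw, rfl⟩
  refine ⟨K, fun k => -(c k), ?_, ?_⟩
  · rw [← hw, ← Finset.sum_neg_distrib]
    exact Finset.sum_congr rfl fun k _ => by ring
  · have hA : ∑ k ∈ Finset.range K, (-(c k)) • seq k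
        = -∑ k ∈ Finset.range K, c k • seq k := by
      rw [← Finset.sum_neg_distrib]
      exact Finset.sum_congr rfl fun k _ => by rw [neg_smul]
    rw [hA]
    have hx : -x + -∑ k ∈ Finset.range K, c k • seq k
        = -(x + ∑ k ∈ Finset.range K, c k • seq k) := by abel
    rw [hx, aux_d0neg d hsymm hinv]
    congr 1
    exact Finset.sum_congr rfl fun k _ => by simp

private lemma auxRep_neg (hsymm : ∀ x y, d x y = d y x)
    (hinv : ∀ a x y, d (a + x) (a + y) = d x y) (x : G) (n : ℤ) :
    auxRep d seq (-x) (-n) = auxRep d seq x n := by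
  refine le_antisymm ?_ (auxRep_neg_subset d seq hsymm hinv x n)
  have := auxRep_neg_subset d seq hsymm hinv (-x) (-n)
  simpa using this

private lemma auxRep_add (hsymm : ∀ x y, d x y = d y x)
    (htri : ∀ x y z, d x z ≤ d x y + d y z)
    (hinv : ∀ a x y, d (a + x) (a + y) = d x y)
    {x1 x2 : G} {n1 n2 : ℤ} {r1 r2 : ℝ}
    (h1 : r1 ∈ auxRep d seq x1 n1) (h2 : r2 ∈ auxRep d seq x2 n2) :
    ∃ r ∈ auxRep d seq (x1 + x2) (n1 + n2), r ≤ r1 + r2 := by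
  obtain ⟨K1, c1, hw1, rfl⟩ := h1
  obtain ⟨K2, c2, hw2, rfl⟩ := h2
  classical
  set K := max K1 K2 with hK
  set a : ℕ → ℤ := fun k => if k < K1 then c1 k else 0 with ha
  set b : ℕ → ℤ := fun k => if k < K2 then c2 k else 0 with hb
  have ta1 : ∑ k ∈ Finset.range K, a k * auxNN k
      = ∑ k ∈ Finset.range K1, c1 k * auxNN k :=
    auxTrunc (fun k z => z * auxNN k) (fun k => by ring) (le_max_left _ _) c1
  have tb1 : ∑ k ∈ Finset.range K, b k * auxNN k
      = ∑ k ∈ Finset.range K2, c2 k * auxNN k :=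
    auxTrunc (fun k z => z * auxNN k) (fun k => by ring) (le_max_right _ _) c2
  have ta2 : ∑ k ∈ Finset.range K, a k • seq k
      = ∑ k ∈ Finset.range K1, c1 k • seq k :=
    auxTrunc (fun k z => z • seq k) (fun k => zero_smul _ _) (le_max_left _ _) c1
  have tb2 : ∑ k ∈ Finset.range K, b k • seq k
      = ∑ k ∈ Finset.range K2, c2 k • seq k :=
    auxTrunc (fun k z => z • seq k) (fun k => zero_smul _ _) (le_max_right _ _) c2
  have ta3 : ∑ k ∈ Finset.range K, (|a k| : ℝ) * (1 / 2 : ℝ) ^ k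
      = ∑ k ∈ Finset.range K1, (|c1 k| : ℝ) * (1 / 2 : ℝ) ^ k :=
    auxTrunc (fun k z => (|z| : ℝ) * (1 / 2 : ℝ) ^ k) (fun k => by simp)
      (le_max_left _ _) c1
  have tb3 : ∑ k ∈ Finset.range K, (|b k| : ℝ) * (1 / 2 : ℝ) ^ k
      = ∑ k ∈ Finset.range K2, (|c2 k| : ℝ) * (1 / 2 : ℝ) ^ k :=
    auxTrunc (fun k z => (|z| : ℝ) * (1 / 2 : ℝ) ^ k) (fun k => by simp)
      (le_max_right _ _) c2
  refine ⟨_, ⟨K, fun k => a k + b k, ?_, rfl⟩, ?_⟩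
  · have : ∑ k ∈ Finset.range K, (a k + b k) * auxNN k
        = ∑ k ∈ Finset.range K, a k * auxNN k
          + ∑ k ∈ Finset.range K, b k * auxNN k := by
      rw [← Finset.sum_add_distrib]
      exact Finset.sum_congr rfl fun k _ => by ring
    rw [this, ta1, tb1, hw1, hw2]
  · have hAsplit : ∑ k ∈ Finset.range K, (a k + b k) • seq k
        = ∑ k ∈ Finset.range K1, c1 k • seq k
          + ∑ k ∈ Finset.range K2, c2 k • seq k := by
      have : ∑ k ∈ Finset.range K, (a k + b k) • seq k
          = ∑ k ∈ Finset.range K, a k • seq k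
            + ∑ k ∈ Finset.range K, b k • seq k := by
        rw [← Finset.sum_add_distrib]
        exact Finset.sum_congr rfl fun k _ => add_smul _ _ _
      rw [this, ta2, tb2]
    have hBle : ∑ k ∈ Finset.range K, (|a k + b k| : ℝ) * (1 / 2 : ℝ) ^ k
        ≤ ∑ k ∈ Finset.range K1, (|c1 k| : ℝ) * (1 / 2 : ℝ) ^ k
          + ∑ k ∈ Finset.range K2, (|c2 k| : ℝ) * (1 / 2 : ℝ) ^ k := by
      rw [← ta3, ← tb3, ← Finset.sum_add_distrib]
      refine Finset.sum_le_sum fun k _ => ?_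
      rw [← add_mul]
      refine mul_le_mul_of_nonneg_right ?_ (by positivity)
      have := abs_add_le (a k) (b k)
      exact_mod_cast this
    have hdle : d 0 (x1 + x2 + ∑ k ∈ Finset.range K, (a k + b k) • seq k)
        ≤ d 0 (x1 + ∑ k ∈ Finset.range K1, c1 k • seq k)
          + d 0 (x2 + ∑ k ∈ Finset.range K2, c2 k • seq k) := by
      rw [hAsplit]
      have harr : x1 + x2 + (∑ k ∈ Finset.range K1, c1 k • seq k
          + ∑ k ∈ Finset.range K2, c2 k • seq k)
          = (x1 + ∑ k ∈ Finset.range K1, c1 k • seq k)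
            + (x2 + ∑ k ∈ Finset.range K2, c2 k • seq k) := by abel
      rw [harr]
      exact aux_d0add d hsymm htri hinv _ _
    simp only [Int.cast_add]
    linarith

private lemma aux_min1 (a b c : ℝ) (hb : 0 ≤ b) (hc : 0 ≤ c) (h : a ≤ b + c) :
    min 1 a ≤ min 1 b + min 1 c := by
  rcases le_total 1 b with hb1 | hb1
  · have h2 : min 1 b = 1 := min_eq_left hb1
    have h3 : (0:ℝ) ≤ min 1 c := le_min zero_le_one hc
    have := min_le_left 1 a
    linarith
  rcases le_total 1 c with hc1 | hc1
  · have h2 : min 1 c = 1 := min_eq_left hc1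
    have h3 : (0:ℝ) ≤ min 1 b := le_min zero_le_one hb
    have := min_le_left 1 a
    linarith
  · rw [min_eq_right hb1, min_eq_right hc1]
    exact le_trans (min_le_right _ _) h

private lemma auxRep_sInf_add (hnonneg : ∀ x y, 0 ≤ d x y)
    (hsymm : ∀ x y, d x y = d y x)
    (htri : ∀ x y z, d x z ≤ d x y + d y z)
    (hinv : ∀ a x y, d (a + x) (a + y) = d x y)
    (x1 x2 : G) (n1 n2 : ℤ) :
    sInf (auxRep d seq (x1 + x2) (n1 + n2))
      ≤ sInf (auxRep d seq x1 n1) + sInf (auxRep d seq x2 n2) := by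
  have key : ∀ r1 ∈ auxRep d seq x1 n1, ∀ r2 ∈ auxRep d seq x2 n2,
      sInf (auxRep d seq (x1 + x2) (n1 + n2)) ≤ r1 + r2 := by
    intro r1 h1 r2 h2
    obtain ⟨r, hr, hle⟩ := auxRep_add d seq hsymm htri hinv h1 h2
    exact le_trans (csInf_le (auxRep_bddBelow d seq hnonneg _ _) hr) hle
  have step1 : ∀ r2 ∈ auxRep d seq x2 n2,
      sInf (auxRep d seq (x1 + x2) (n1 + n2)) - r2 ≤ sInf (auxRep d seq x1 n1) := by
    intro r2 h2
    refine le_csInf (auxRep_nonempty d seq x1 n1) fun r1 h1 => ?_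
    linarith [key r1 h1 r2 h2]
  have step2 : sInf (auxRep d seq (x1 + x2) (n1 + n2)) - sInf (auxRep d seq x1 n1)
      ≤ sInf (auxRep d seq x2 n2) := by
    refine le_csInf (auxRep_nonempty d seq x2 n2) fun r2 h2 => ?_
    linarith [step1 r2 h2]
  linarith

end RepLemmas



/-- If `G` is a separable abelian topological group and `d` is a continuous
invariant pseudometric on `G` bounded by `1`, then there is an invariant pseudometric `D` on
`G × ℤ`, bounded by `1`, extending `d`, such that every element `(g, 0)` with `g` in a fixed
countable dense subgroup of `G` is approximated arbitrarily well by elements `(0, n)` of the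
cyclic subgroup. -/
theorem invariant_pseudometric_extends_to_dense_cyclic
    (G : Type*) [TopologicalSpace G] [AddCommGroup G] [IsTopologicalAddGroup G]
    [TopologicalSpace.SeparableSpace G]
    (d : G → G → ℝ)
    (hnonneg : ∀ x y, 0 ≤ d x y)
    (hrefl : ∀ x, d x x = 0)
    (hsymm : ∀ x y, d x y = d y x)
    (htri : ∀ x y z, d x z ≤ d x y + d y z)
    (hinv : ∀ a x y, d (a + x) (a + y) = d x y)
    (hbdd : ∀ x y, d x y ≤ 1)
    (hcont : Continuous fun p : G × G => d p.1 p.2) :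
    ∃ S : AddSubgroup G, (S : Set G).Countable ∧ Dense (S : Set G) ∧
      ∃ D : G × ℤ → G × ℤ → ℝ,
        (∀ x y, 0 ≤ D x y) ∧
        (∀ x, D x x = 0) ∧
        (∀ x y, D x y = D y x) ∧
        (∀ x y z, D x z ≤ D x y + D y z) ∧
        (∀ a x y, D (a + x) (a + y) = D x y) ∧
        (∀ x y, D x y ≤ 1) ∧
        (∀ g h : G, D (g, 0) (h, 0) = d g h) ∧
        (∀ g ∈ S, ∀ ε > (0 : ℝ), ∃ n : ℤ, D ((0 : G), n) (g, 0) ≤ ε) := by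
  classical
  obtain ⟨t, htc, htd⟩ := TopologicalSpace.exists_countable_dense G
  set S := AddSubgroup.closure t with hS
  have hSc : (S : Set G).Countable := aux_closure_countable htc
  have hSd : Dense (S : Set G) := htd.mono AddSubgroup.subset_closure
  have hSne : (S : Set G).Nonempty := ⟨0, S.zero_mem⟩
  obtain ⟨f, hf⟩ := Set.Countable.exists_eq_range hSc hSne
  set seq : ℕ → G := fun k => f (Nat.unpair k).1 with hseq
  refine ⟨S, hSc, hSd,
    fun x y => min 1 (sInf (auxRep d seq (y.1 - x.1) (y.2 - x.2))),
    ?_, ?_, ?_, ?_, ?_, ?_, ?_, ?_⟩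
  · intro x y
    exact le_min zero_le_one
      (Real.sInf_nonneg (auxRep_nonneg d seq hnonneg _ _))
  · intro x
    simp only [sub_self]
    rw [auxRep_sInf_zero d seq hnonneg hbdd 0, hrefl]
    exact min_eq_right zero_le_one
  · intro x y
    beta_reduce
    rw [show y.1 - x.1 = -(x.1 - y.1) by abel, show y.2 - x.2 = -(x.2 - y.2) by ring,
      auxRep_neg d seq hsymm hinv]
  · intro x y z
    beta_reduce
    rw [show z.1 - x.1 = (y.1 - x.1) + (z.1 - y.1) by abel,
      show z.2 - x.2 = (y.2 - x.2) + (z.2 - y.2) by ring]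
    exact aux_min1 _ _ _
      (Real.sInf_nonneg (auxRep_nonneg d seq hnonneg _ _))
      (Real.sInf_nonneg (auxRep_nonneg d seq hnonneg _ _))
      (auxRep_sInf_add d seq hnonneg hsymm htri hinv _ _ _ _)
  · intro a x y
    beta_reduce
    rw [show (a + y).1 - (a + x).1 = y.1 - x.1 by
        rw [Prod.fst_add, Prod.fst_add]; abel,
      show (a + y).2 - (a + x).2 = y.2 - x.2 by
        rw [Prod.snd_add, Prod.snd_add]; ring]
  · intro x y
    exact min_le_left _ _
  · intro g h
    show min 1 (sInf (auxRep d seq (h - g) ((0:ℤ) - 0))) = d g h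
    rw [show ((0:ℤ) - 0) = 0 by ring, auxRep_sInf_zero d seq hnonneg hbdd]
    have h1 : d g h = d 0 (h - g) := by
      have := hinv g 0 (h - g)
      simpa using this
    rw [← h1]
    exact min_eq_right (hbdd g h)
  · intro g hg ε hε
    have hgneg : -g ∈ S := S.neg_mem hg
    have : -g ∈ Set.range f := hf ▸ hgneg
    obtain ⟨j, hj⟩ := this
    obtain ⟨m, hm⟩ := exists_pow_lt_of_lt_one hε (by norm_num : (1/2 : ℝ) < 1)
    set k := Nat.pair j m with hk
    have hseqk : seq k = -g := by
      simp only [hseq, hk, Nat.unpair_pair]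
      exact hj
    refine ⟨-auxNN k, ?_⟩
    show min 1 (sInf (auxRep d seq (g - 0) ((0:ℤ) - -auxNN k))) ≤ ε
    rw [show g - 0 = g by abel, show ((0:ℤ) - -auxNN k) = auxNN k by ring]
    have hmem : ((1/2 : ℝ) ^ k) ∈ auxRep d seq g (auxNN k) := by
      refine ⟨k + 1, fun j' => if j' = k then 1 else 0, ?_, ?_⟩
      · show ∑ j' ∈ Finset.range (k + 1),
            (if j' = k then (1:ℤ) else 0) * auxNN j' = auxNN k
        rw [Finset.sum_eq_single k (fun b _ hb => by simp [hb])
          (fun h => absurd (Finset.self_mem_range_succ k) h)]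
        simp
      · have hA : ∑ j' ∈ Finset.range (k + 1),
            (if j' = k then (1:ℤ) else 0) • seq j' = seq k := by
          rw [Finset.sum_eq_single k (fun b _ hb => by simp [hb])
            (fun h => absurd (Finset.self_mem_range_succ k) h)]
          simp
        have hB : ∑ j' ∈ Finset.range (k + 1),
            |((if j' = k then (1:ℤ) else 0 : ℤ) : ℝ)| * (1/2 : ℝ) ^ j'
            = (1/2 : ℝ) ^ k := by
          rw [Finset.sum_eq_single k (fun b _ hb => by simp [hb])
            (fun h => absurd (Finset.self_mem_range_succ k) h)]
          simp
        show (1/2 : ℝ) ^ k = d 0 (g + ∑ j' ∈ Finset.range (k + 1),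
            (if j' = k then (1:ℤ) else 0) • seq j')
          + ∑ j' ∈ Finset.range (k + 1),
            |((if j' = k then (1:ℤ) else 0 : ℤ) : ℝ)| * (1/2 : ℝ) ^ j'
        rw [hA, hB, hseqk]
        simp [hrefl]
    calc min 1 (sInf (auxRep d seq g (auxNN k)))
        ≤ sInf (auxRep d seq g (auxNN k)) := min_le_right _ _
      _ ≤ (1/2 : ℝ) ^ k := csInf_le (auxRep_bddBelow d seq hnonneg _ _) hmem
      _ ≤ (1/2 : ℝ) ^ m :=
          pow_le_pow_of_le_one (by norm_num) (by norm_num) (Nat.right_le_pair j m)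
      _ ≤ ε := hm.le
end

section
/- (Morris–Pestov) Every separable abelian topological group G embeds into a monothetic topological group; that is, there exists a topological group M containing a dense cyclic subgroup (the closure of the subgroup generated by some single element of M equals M) and an injective continuous group homomorphism φ : G → M that is a topological embedding (φ is a homeomorphism onto its image with the subspace topology). -/
universe u

open Filter Set TopologicalSpace Topology Pointwise

namespace MorrisPestovAux

variable {G : Type u} [AddCommGroup G]

/-- The sequence of "relator" elements of `G × ℤ`. -/
noncomputable def s (t : ℕ → G) (p : ℕ) : G × ℤ :=
  (-(t (Nat.unpair p).1), (Nat.factorial p : ℤ))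

/-- Counting function for coefficient bounds. -/
def cnt (m : ℕ → ℕ) (p : ℕ) : ℕ := ((Finset.range p).filter fun i => m i ≤ p).card

lemma cnt_le (m : ℕ → ℕ) (p : ℕ) : cnt m p ≤ p :=
  le_trans (Finset.card_filter_le _ _) (by simp)

lemma cnt_le_cnt {m m' : ℕ → ℕ} (h : ∀ i, m i ≤ m' i) (p : ℕ) : cnt m' p ≤ cnt m p := by
  apply Finset.card_le_card
  intro i hi
  simp only [Finset.mem_filter, Finset.mem_range] at hi ⊢
  exact ⟨hi.1, le_trans (h i) hi.2⟩

lemma one_le_cnt {m : ℕ → ℕ} (hlt : ∀ i, i < m i) {p : ℕ} (hp : m 0 ≤ p) : 1 ≤ cnt m p := by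
  have h0 : 0 < p := lt_of_lt_of_le (hlt 0) hp
  have : 0 ∈ (Finset.range p).filter fun i => m i ≤ p := by
    simp [Finset.mem_filter, Finset.mem_range, h0, hp]
  exact Finset.card_pos.2 ⟨0, this⟩

lemma two_mul_cnt {m : ℕ → ℕ} (hmono : Monotone m) (hlt : ∀ i, i < m i) (p : ℕ) :
    2 * cnt (fun i => m (2 * i + 1)) p ≤ cnt m p := by
  classical
  set A := (Finset.range p).filter (fun i => m (2 * i + 1) ≤ p) with hA
  set B := (Finset.range p).filter (fun i => m i ≤ p) with hB
  have h1 : A.image (fun i => 2 * i) ⊆ B := by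
    intro x hx
    simp only [Finset.mem_image] at hx
    obtain ⟨i, hi, rfl⟩ := hx
    simp only [hA, Finset.mem_filter, Finset.mem_range] at hi
    have h2 : 2 * i + 1 < p := lt_of_lt_of_le (hlt _) hi.2
    refine Finset.mem_filter.2 ⟨Finset.mem_range.2 (by omega), ?_⟩
    exact le_trans (hmono (by omega : 2 * i ≤ 2 * i + 1)) hi.2
  have h2 : A.image (fun i => 2 * i + 1) ⊆ B := by
    intro x hx
    simp only [Finset.mem_image] at hx
    obtain ⟨i, hi, rfl⟩ := hx
    simp only [hA, Finset.mem_filter, Finset.mem_range] at hi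
    have h2 : 2 * i + 1 < p := lt_of_lt_of_le (hlt _) hi.2
    exact Finset.mem_filter.2 ⟨Finset.mem_range.2 h2, hi.2⟩
  have hdisj : Disjoint (A.image (fun i => 2 * i)) (A.image (fun i => 2 * i + 1)) := by
    rw [Finset.disjoint_left]
    intro x hx hx'
    simp only [Finset.mem_image] at hx hx'
    obtain ⟨a, _, ha⟩ := hx
    obtain ⟨b, _, hb⟩ := hx'
    omega
  have hcard : (A.image (fun i => 2 * i) ∪ A.image (fun i => 2 * i + 1)).card = 2 * A.card := by
    rw [Finset.card_union_of_disjoint hdisj,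
      Finset.card_image_of_injective _ (fun a b h => by omega),
      Finset.card_image_of_injective _ (fun a b h => by omega)]
    ring
  calc 2 * cnt (fun i => m (2 * i + 1)) p = 2 * A.card := rfl
    _ = (A.image (fun i => 2 * i) ∪ A.image (fun i => 2 * i + 1)).card := hcard.symm
    _ ≤ B.card := Finset.card_le_card (Finset.union_subset h1 h2)
    _ = cnt m p := rfl

/-- the `G`-component of a linear combination of the `s`. -/
noncomputable def lcG (t : ℕ → G) (c : ℕ →₀ ℤ) : G :=
  c.sum fun p k => k • (-(t (Nat.unpair p).1))

/-- the `ℤ`-component of a linear combination of the `s`. -/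
noncomputable def lcZ (c : ℕ →₀ ℤ) : ℤ :=
  c.sum fun p k => k * (Nat.factorial p : ℤ)

noncomputable def lc (t : ℕ → G) (c : ℕ →₀ ℤ) : G × ℤ := (lcG t c, lcZ c)

lemma lc_zero (t : ℕ → G) : lc t 0 = 0 := by
  simp [lc, lcG, lcZ]

lemma lc_add (t : ℕ → G) (c c' : ℕ →₀ ℤ) : lc t (c + c') = lc t c + lc t c' := by
  unfold lc lcG lcZ
  rw [Finsupp.sum_add_index' (fun p => by simp) (fun p k l => add_smul k l _),
    Finsupp.sum_add_index' (fun p => by simp) (fun p k l => add_mul k l _)]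
  rfl

lemma lc_neg (t : ℕ → G) (c : ℕ →₀ ℤ) : lc t (-c) = -(lc t c) := by
  have h := lc_add t c (-c)
  rw [add_neg_cancel, lc_zero] at h
  exact (neg_eq_of_add_eq_zero_right h.symm).symm

lemma lc_single (t : ℕ → G) (p : ℕ) : lc t (Finsupp.single p 1) = s t p := by
  unfold lc lcG lcZ s
  rw [Finsupp.sum_single_index (by simp), Finsupp.sum_single_index (by simp)]
  simp

lemma sum_range_mul_factorial (n : ℕ) :
    ∑ p ∈ Finset.range n, (p : ℤ) * (Nat.factorial p : ℤ) = (Nat.factorial n : ℤ) - 1 := by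
  induction n with
  | zero => simp
  | succ k ih =>
    rw [Finset.sum_range_succ, ih, Nat.factorial_succ]
    push_cast
    ring

lemma lcZ_eq_zero {c : ℕ →₀ ℤ} (hb : ∀ p, |c p| ≤ (p : ℤ)) (h : lcZ c = 0) : c = 0 := by
  by_contra hc
  have hne : c.support.Nonempty := Finsupp.support_nonempty_iff.2 hc
  set P := c.support.max' hne with hPdef
  have hPmem : P ∈ c.support := c.support.max'_mem hne
  have hsum : lcZ c = c P * (Nat.factorial P : ℤ) +
      ∑ p ∈ c.support.erase P, c p * (Nat.factorial p : ℤ) := by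
    unfold lcZ Finsupp.sum
    exact (Finset.add_sum_erase _ _ hPmem).symm
  have hsub : c.support.erase P ⊆ Finset.range P := by
    intro p hp
    exact Finset.mem_range.2 (lt_of_le_of_ne
      (Finset.le_max' c.support p (Finset.mem_of_mem_erase hp)) (Finset.ne_of_mem_erase hp))
  have habs : |∑ p ∈ c.support.erase P, c p * (Nat.factorial p : ℤ)| ≤
      (Nat.factorial P : ℤ) - 1 := by
    calc |∑ p ∈ c.support.erase P, c p * (Nat.factorial p : ℤ)|
        ≤ ∑ p ∈ c.support.erase P, |c p * (Nat.factorial p : ℤ)| :=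
          Finset.abs_sum_le_sum_abs _ _
      _ ≤ ∑ p ∈ c.support.erase P, (p : ℤ) * (Nat.factorial p : ℤ) := by
          refine Finset.sum_le_sum fun p _ => ?_
          rw [abs_mul, abs_of_nonneg (by positivity : (0:ℤ) ≤ (Nat.factorial p : ℤ))]
          exact mul_le_mul_of_nonneg_right (hb p) (by positivity)
      _ ≤ ∑ p ∈ Finset.range P, (p : ℤ) * (Nat.factorial p : ℤ) :=
          Finset.sum_le_sum_of_subset_of_nonneg hsub (fun p _ _ => by positivity)
      _ = (Nat.factorial P : ℤ) - 1 := sum_range_mul_factorial P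
  have h1 : (1:ℤ) ≤ |c P| := Int.one_le_abs (by exact Finsupp.mem_support_iff.1 hPmem)
  have h2 : (Nat.factorial P : ℤ) ≤ |c P * (Nat.factorial P : ℤ)| := by
    rw [abs_mul, abs_of_nonneg (by positivity : (0:ℤ) ≤ (Nat.factorial P : ℤ))]
    nlinarith [show (0:ℤ) < (Nat.factorial P : ℤ) from Nat.cast_pos.2 (Nat.factorial_pos P)]
  have heq : c P * (Nat.factorial P : ℤ) =
      -∑ p ∈ c.support.erase P, c p * (Nat.factorial p : ℤ) := by
    rw [hsum] at h; linarith
  rw [heq, abs_neg] at h2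
  linarith

section Topology

variable [TopologicalSpace G] [IsTopologicalAddGroup G]
set_option linter.unusedSectionVars false
set_option linter.unusedVariables false

/-- The basic neighbourhoods of `0` in `G × ℤ`. -/
noncomputable def Wset (t : ℕ → G) (U : Set G) (m : ℕ → ℕ) : Set (G × ℤ) :=
  {x | ∃ u ∈ U, ∃ c : ℕ →₀ ℤ, (∀ p, |c p| ≤ (cnt m p : ℤ)) ∧ x = ((u, 0) : G × ℤ) + lc t c}

/-- The collection of basic neighbourhoods of `0` in `G × ℤ`. -/
noncomputable def bas (t : ℕ → G) : Set (Set (G × ℤ)) :=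
  {W | ∃ U ∈ 𝓝 (0 : G), ∃ m : ℕ → ℕ, Monotone m ∧ (∀ i, i < m i) ∧ W = Wset t U m}

lemma Wset_mono (t : ℕ → G) {U U' : Set G} (hU : U ⊆ U') {m m' : ℕ → ℕ}
    (h : ∀ p, cnt m p ≤ cnt m' p) : Wset t U m ⊆ Wset t U' m' := by
  rintro x ⟨u, hu, c, hc, rfl⟩
  exact ⟨u, hU hu, c, fun p => le_trans (hc p) (by exact_mod_cast h p), rfl⟩

lemma mem_Wset_self (t : ℕ → G) {U : Set G} (hU : (0:G) ∈ U) (m : ℕ → ℕ) {u : G}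
    (hu : u ∈ U) : ((u, 0) : G × ℤ) ∈ Wset t U m :=
  ⟨u, hu, 0, by simp, by simp [lc_zero]⟩

/-- The additive group filter basis on `G × ℤ`. -/
noncomputable def fb (t : ℕ → G) : AddGroupFilterBasis (G × ℤ) := by
  apply addGroupFilterBasisOfComm (bas t)
  · exact ⟨Wset t univ (fun i => i + 1), univ, univ_mem, fun i => i + 1,
      fun a b h => Nat.succ_le_succ h, fun i => Nat.lt_succ_self i, rfl⟩
  · rintro x y ⟨U₁, hU₁, m₁, hm₁, hlt₁, rfl⟩ ⟨U₂, hU₂, m₂, hm₂, hlt₂, rfl⟩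
    refine ⟨Wset t (U₁ ∩ U₂) (fun i => max (m₁ i) (m₂ i)),
      ⟨U₁ ∩ U₂, inter_mem hU₁ hU₂, _, fun a b h => max_le_max (hm₁ h) (hm₂ h),
        fun i => lt_of_lt_of_le (hlt₁ i) (le_max_left _ _), rfl⟩, ?_⟩
    exact subset_inter
      (Wset_mono t inter_subset_left (cnt_le_cnt (fun i => le_max_left _ _)))
      (Wset_mono t inter_subset_right (cnt_le_cnt (fun i => le_max_right _ _)))
  · rintro W ⟨U, hU, m, hm, hlt, rfl⟩
    exact mem_Wset_self t (mem_of_mem_nhds hU) m (mem_of_mem_nhds hU)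
  · rintro W ⟨U, hU, m, hm, hlt, rfl⟩
    obtain ⟨U', hU', hhalf⟩ := exists_nhds_zero_half hU
    refine ⟨Wset t U' (fun i => m (2 * i + 1)),
      ⟨U', hU', _, fun a b h => hm (by omega), fun i => lt_of_le_of_lt (by omega : i ≤ 2*i+1) (hlt _), rfl⟩, ?_⟩
    rintro x ⟨y, ⟨u, hu, cy, hcy, rfl⟩, z, ⟨v, hv, cz, hcz, rfl⟩, rfl⟩
    refine ⟨u + v, hhalf u hu v hv, cy + cz, ?_, ?_⟩
    · intro p
      have hb := two_mul_cnt hm hlt p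
      calc |(cy + cz) p| ≤ |cy p| + |cz p| := by rw [Finsupp.add_apply]; exact abs_add_le _ _
        _ ≤ (cnt (fun i => m (2*i+1)) p : ℤ) + (cnt (fun i => m (2*i+1)) p : ℤ) :=
            add_le_add (hcy p) (hcz p)
        _ ≤ (cnt m p : ℤ) := by omega
    · rw [lc_add]
      have : ((u + v, 0) : G × ℤ) = ((u,0) : G × ℤ) + ((v,0) : G × ℤ) := by simp
      rw [this]; abel_nf
  · rintro W ⟨U, hU, m, hm, hlt, rfl⟩
    have hneg : (fun u : G => -u) ⁻¹' U ∈ 𝓝 (0:G) := by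
      have : Filter.Tendsto (fun u : G => -u) (𝓝 0) (𝓝 0) := by
        simpa using (continuous_neg (G := G)).tendsto (0:G)
      exact this hU
    refine ⟨Wset t ((fun u : G => -u) ⁻¹' U) m, ⟨_, hneg, m, hm, hlt, rfl⟩, ?_⟩
    rintro x ⟨u, hu, c, hc, rfl⟩
    refine ⟨-u, hu, -c, fun p => by rw [Finsupp.neg_apply, abs_neg]; exact hc p, ?_⟩
    rw [lc_neg]
    have : ((-u, 0) : G × ℤ) = -((u,0) : G × ℤ) := by simp
    rw [this]; abel_nf

lemma preimage_Wset (t : ℕ → G) {U : Set G} (m : ℕ → ℕ) :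
    (fun g : G => ((g, 0) : G × ℤ)) ⁻¹' Wset t U m = U := by
  ext g
  constructor
  · rintro ⟨u, hu, c, hb, hx⟩
    have hx2 : (0:ℤ) = 0 + lcZ c := congrArg Prod.snd hx
    have h2 : lcZ c = 0 := by linarith
    have hc0 : c = 0 := lcZ_eq_zero
      (fun p => le_trans (hb p) (by exact_mod_cast cnt_le m p)) h2
    subst hc0
    have hx1 : g = u + lcG t 0 := congrArg Prod.fst hx
    rw [show lcG t (0 : ℕ →₀ ℤ) = 0 by simp [lcG], add_zero] at hx1
    rw [hx1]; exact hu
  · intro hg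
    exact ⟨g, hg, 0, by simp, by simp [lc_zero]⟩

end Topology

end MorrisPestovAux

open MorrisPestovAux in
/-- **Morris–Pestov.** Every separable abelian topological group embeds
(topologically, as a group) into a monothetic topological group. -/
theorem embeds_into_monothetic_group
    (G : Type u) [TopologicalSpace G] [AddCommGroup G] [IsTopologicalAddGroup G]
    [TopologicalSpace.SeparableSpace G] :
    ∃ (M : Type u) (_ : TopologicalSpace M) (_ : AddCommGroup M) (_ : IsTopologicalAddGroup M)
      (c : M) (φ : G →+ M),
      Dense (AddSubgroup.zmultiples c : Set M) ∧
      Function.Injective φ ∧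
      Continuous φ ∧
      Topology.IsEmbedding φ := by
  classical
  haveI : Nonempty G := ⟨0⟩
  set t : ℕ → G := TopologicalSpace.denseSeq G with htdef
  have ht : DenseRange t := TopologicalSpace.denseRange_denseSeq G
  let B := MorrisPestovAux.fb t
  letI τM : TopologicalSpace (G × ℤ) := B.topology
  haveI hTG : @IsTopologicalAddGroup (G × ℤ) τM _ := B.isTopologicalAddGroup
  let ι : G → G × ℤ := fun g => (g, 0)
  -- pullback of the neighborhood filter of zero
  have hcomap : Filter.comap ι (𝓝 (0 : G × ℤ)) = 𝓝 (0 : G) := by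
    apply le_antisymm
    · intro S hS
      refine Filter.mem_comap.2 ⟨Wset t S (fun i => i + 1), ?_, ?_⟩
      · refine B.mem_nhds_zero ?_
        exact ⟨S, hS, fun i => i + 1, fun a b h => Nat.succ_le_succ h,
          fun i => Nat.lt_succ_self i, rfl⟩
      · rw [preimage_Wset t (fun i => i + 1)]
    · intro S hS
      obtain ⟨W, hW, hWS⟩ := Filter.mem_comap.1 hS
      obtain ⟨W', hW'B, hW'W⟩ := B.nhds_zero_hasBasis.mem_iff.1 hW
      obtain ⟨U, hU, m, hmono, hlt, rfl⟩ := (hW'B : W' ∈ bas t)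
      refine Filter.mem_of_superset hU fun g hg => ?_
      exact hWS (hW'W (mem_Wset_self t (mem_of_mem_nhds hU) m hg))
  -- the embedding
  have hTGind : @IsTopologicalAddGroup G (TopologicalSpace.induced ι τM) _ :=
    topologicalAddGroup_induced (AddMonoidHom.inl G ℤ)
  have heq : (‹TopologicalSpace G› : TopologicalSpace G) = TopologicalSpace.induced ι τM := by
    refine IsTopologicalAddGroup.ext ‹_› hTGind ?_
    rw [nhds_induced]
    exact hcomap.symm
  have hind : Topology.IsInducing ι := ⟨heq⟩
  have hcont : Continuous ι := hind.continuous
  have hinj : Function.Injective ι := fun a b h => by simpa using congrArg Prod.fst h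
  have hemb : Topology.IsEmbedding ι := ⟨hind, hinj⟩
  -- density of the multiples of c
  set c : G × ℤ := ((0 : G), (1 : ℤ)) with hcdef
  have hsmul : ∀ k : ℤ, k • c = ((0 : G), k) := by
    intro k
    have h1 : k • c = (k • (0 : G), k • (1 : ℤ)) := rfl
    rw [h1, smul_zero, smul_eq_mul, mul_one]
  set Z : AddSubgroup (G × ℤ) := AddSubgroup.zmultiples c with hZdef
  have hrange : ∀ i : ℕ, ι (t i) ∈ closure (Z : Set (G × ℤ)) := by
    intro i
    rw [mem_closure_iff_nhds_basis (B.nhds_hasBasis (ι (t i)))]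
    intro W hWB
    obtain ⟨U, hU, m, hmono, hlt, rfl⟩ := (hWB : W ∈ bas t)
    set p := Nat.pair i (m 0) with hp
    have hmp : m 0 ≤ p := Nat.right_le_pair _ _
    refine ⟨((Nat.factorial p : ℤ)) • c, Z.zsmul_mem (AddSubgroup.mem_zmultiples c) _,
      MorrisPestovAux.s t p, ?_, ?_⟩
    · refine ⟨0, mem_of_mem_nhds hU, Finsupp.single p 1, ?_, ?_⟩
      · intro q
        rcases eq_or_ne q p with rfl | hq
        · rw [Finsupp.single_apply, if_pos rfl]
          have := one_le_cnt hlt hmp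
          simp only [abs_one]
          exact_mod_cast this
        · rw [Finsupp.single_apply, if_neg (by exact fun h => hq h.symm)]
          simp
      · rw [lc_single]
        have : ((0 : G), (0 : ℤ)) = (0 : G × ℤ) := rfl
        rw [this, zero_add]
    · rw [hsmul]
      show ((t i, 0) : G × ℤ) + MorrisPestovAux.s t p = _
      unfold MorrisPestovAux.s
      rw [hp, Nat.unpair_pair]
      ext <;> simp
  have hG0 : ∀ g : G, ι g ∈ closure (Z : Set (G × ℤ)) := by
    have hcl : IsClosed (ι ⁻¹' closure (Z : Set (G × ℤ))) := isClosed_closure.preimage hcont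
    have hsub : range t ⊆ ι ⁻¹' closure (Z : Set (G × ℤ)) := range_subset_iff.2 hrange
    have h2 : closure (range t) ⊆ ι ⁻¹' closure (Z : Set (G × ℤ)) := closure_minimal hsub hcl
    intro g
    exact h2 (by rw [ht.closure_eq]; trivial)
  have hcS : c ∈ Z.topologicalClosure := Z.le_topologicalClosure (AddSubgroup.mem_zmultiples c)
  have hdense : Dense (Z : Set (G × ℤ)) := by
    rw [dense_iff_closure_eq]
    refine eq_univ_iff_forall.2 fun x => ?_
    have hx : x = ι x.1 + x.2 • c := by
      rw [hsmul]
      ext <;> simp [ι]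
    have hmem : x ∈ Z.topologicalClosure := by
      rw [hx]
      exact Z.topologicalClosure.add_mem (hG0 x.1) (Z.topologicalClosure.zsmul_mem hcS x.2)
    exact hmem
  exact ⟨G × ℤ, τM, inferInstance, hTG, c, AddMonoidHom.inl G ℤ, hdense, hinj, hcont, hemb⟩
end

section
/- Let H be a countable abelian group and let (ρ_α)_{α ∈ I} be a family of invariant pseudometrics on H, each bounded by 1, which generate a group topology on H. Then there exists a family (D_α)_{α ∈ I} of invariant pseudometrics on the product group H × ℤ, each bounded by 1, such that for every α: D_α((g,0),(h,0)) = ρ_α(g,h) for all g,h ∈ H, and such that the cyclic subgroup {(0,n) : n ∈ ℤ} is dense in H × ℤ in the topology generated by the family (D_α)_{α ∈ I} (the coarsest topology making all D_α continuous, i.e., generated by the pseudometric balls of all D_α). -/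
open Finset

def Aseq : ℕ → ℕ
  | 0 => 1
  | n+1 => Aseq n * (1 + 2^(n+1))

def kseq : ℕ → ℕ
  | 0 => 1
  | n+1 => 2^(n+1) * Aseq n

lemma Aseq_pos (n : ℕ) : 0 < Aseq n := by
  induction n with
  | zero => simp [Aseq]
  | succ m ih =>
      have : 0 < Aseq m * (1 + 2^(m+1)) := Nat.mul_pos ih (by positivity)
      simpa [Aseq] using this

lemma kseq_pos (n : ℕ) : 0 < kseq n := by
  cases n with
  | zero => simp [kseq]
  | succ m =>
      have : 0 < 2^(m+1) * Aseq m := Nat.mul_pos (Nat.two_pow_pos (m+1)) (Aseq_pos m)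
      simpa [kseq] using this

lemma sum_kseq (n : ℕ) : ∑ i ∈ Finset.range (n+1), kseq i = Aseq n := by
  induction n with
  | zero => simp [kseq, Aseq]
  | succ m ih =>
      rw [Finset.sum_range_succ, ih]
      simp only [kseq, Aseq]
      ring

lemma kseq_le_Aseq (n : ℕ) : kseq n ≤ Aseq n := by
  rw [← sum_kseq n]
  exact Finset.single_le_sum (f := kseq) (fun i _ => Nat.zero_le _)
    (Finset.self_mem_range_succ n)

lemma kseq_strictMono : StrictMono kseq := by
  apply strictMono_nat_of_lt_succ
  intro n
  calc kseq n ≤ Aseq n := kseq_le_Aseq n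
    _ < 2^(n+1) * Aseq n := by
        have := Aseq_pos n
        have h2 : 2 ≤ 2^(n+1) := Nat.one_lt_two_pow (by omega)
        nlinarith
    _ = kseq (n+1) := rfl

lemma keysum (n : ℕ) : ∑ j ∈ Finset.range n, (2^j - 1) * kseq j < kseq n := by
  cases n with
  | zero => simp [kseq]
  | succ m =>
      calc ∑ j ∈ Finset.range (m+1), (2^j - 1) * kseq j
          ≤ ∑ j ∈ Finset.range (m+1), (2^m - 1) * kseq j := by
            apply Finset.sum_le_sum
            intro j hj
            have : (2:ℕ)^j ≤ 2^m := Nat.pow_le_pow_right (by norm_num) (by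
              exact Nat.lt_succ_iff.mp (Finset.mem_range.mp hj))
            exact Nat.mul_le_mul_right _ (by omega)
        _ = (2^m - 1) * Aseq m := by rw [← Finset.mul_sum, sum_kseq]
        _ < 2^(m+1) * Aseq m := by
            have := Aseq_pos m
            have h1 : (2:ℕ)^m - 1 < 2^(m+1) := by
              have : (2:ℕ)^m ≤ 2^(m+1) := Nat.pow_le_pow_right (by norm_num) (by omega)
              have := Nat.one_le_two_pow (n := m)
              omega
            exact (Nat.mul_lt_mul_right this).mpr h1
        _ = kseq (m+1) := rfl

lemma cancel (c : ℕ →₀ ℤ) (hb : ∀ j, |c j| < 2^j)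
    (h0 : Finsupp.linearCombination ℤ (fun j => (kseq j : ℤ)) c = 0) : c = 0 := by
  by_contra hc
  have hne : c.support.Nonempty := Finsupp.support_nonempty_iff.mpr hc
  set n := c.support.max' hne with hn
  have hcn : c n ≠ 0 := Finsupp.mem_support_iff.mp (c.support.max'_mem hne)
  have hsub : c.support ⊆ Finset.range (n+1) := by
    intro j hj
    exact Finset.mem_range.mpr (Nat.lt_succ_of_le (Finset.le_max' _ _ hj))
  have hsum : ∑ j ∈ Finset.range (n+1), c j * (kseq j : ℤ) = 0 := by
    rw [Finsupp.linearCombination_apply] at h0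
    rw [← h0]
    rw [Finsupp.sum_of_support_subset c hsub (fun j m => m • (kseq j : ℤ)) (by simp)]
    simp [smul_eq_mul]
  rw [Finset.sum_range_succ] at hsum
  have habs : |c n * (kseq n : ℤ)| = |∑ j ∈ Finset.range n, c j * (kseq j : ℤ)| := by
    rw [show c n * (kseq n : ℤ) = -(∑ j ∈ Finset.range n, c j * (kseq j : ℤ)) by linarith]
    rw [abs_neg]
  have hub : |∑ j ∈ Finset.range n, c j * (kseq j : ℤ)| ≤
      ∑ j ∈ Finset.range n, ((2:ℤ)^j - 1) * kseq j := by
    calc |∑ j ∈ Finset.range n, c j * (kseq j : ℤ)|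
        ≤ ∑ j ∈ Finset.range n, |c j * (kseq j : ℤ)| := Finset.abs_sum_le_sum_abs _ _
      _ ≤ ∑ j ∈ Finset.range n, ((2:ℤ)^j - 1) * kseq j := by
          apply Finset.sum_le_sum
          intro j _
          rw [abs_mul, abs_of_nonneg (by positivity : (0:ℤ) ≤ (kseq j : ℤ))]
          have : |c j| ≤ 2^j - 1 := by have := hb j; omega
          exact mul_le_mul_of_nonneg_right this (by positivity)
  have hkey : ∑ j ∈ Finset.range n, ((2:ℤ)^j - 1) * kseq j < (kseq n : ℤ) := by
    have := keysum n
    have hcast : ((∑ j ∈ Finset.range n, (2^j - 1) * kseq j : ℕ) : ℤ)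
        = ∑ j ∈ Finset.range n, ((2:ℤ)^j - 1) * kseq j := by
      push_cast
      apply Finset.sum_congr rfl
      intro j _
      have : (1:ℕ) ≤ 2^j := Nat.one_le_two_pow
      push_cast [Nat.cast_sub this]
      ring
    rw [← hcast]
    exact_mod_cast this
  have hlb : (kseq n : ℤ) ≤ |c n * (kseq n : ℤ)| := by
    rw [abs_mul, abs_of_nonneg (by positivity : (0:ℤ) ≤ (kseq n : ℤ))]
    have : 1 ≤ |c n| := Int.one_le_abs hcn
    nlinarith [Int.natCast_pos.mpr (kseq_pos n)]
  have : (kseq n : ℤ) < (kseq n : ℤ) := lt_of_le_of_lt (hlb.trans (le_of_eq habs) |>.trans hub) hkey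
  exact lt_irrefl _ this

section Aux

open scoped Classical

variable {H : Type*} [AddCommGroup H]

/-- The set of "special moves" in `H × ℤ`. -/
def Bf (s : ℕ → H) (z : H × ℤ) : Prop :=
  ∃ j, z = (s j, (kseq j : ℤ)) ∨ z = (-s j, -(kseq j : ℤ))

lemma Bf_unique {s : ℕ → H} {z : H × ℤ} {j j' : ℕ}
    (h : z = (s j, (kseq j : ℤ)) ∨ z = (-s j, -(kseq j : ℤ)))
    (h' : z = (s j', (kseq j' : ℤ)) ∨ z = (-s j', -(kseq j' : ℤ))) : j = j' := by
  have kp : ∀ i, (0:ℤ) < (kseq i : ℤ) := fun i => by exact_mod_cast kseq_pos i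
  have h2 : z.2 = (kseq j : ℤ) ∨ z.2 = -(kseq j : ℤ) := by
    rcases h with h | h <;> rw [h] <;> simp
  have h2' : z.2 = (kseq j' : ℤ) ∨ z.2 = -(kseq j' : ℤ) := by
    rcases h' with h' | h' <;> rw [h'] <;> simp
  have : kseq j = kseq j' := by
    have := kp j; have := kp j'
    rcases h2 with h2 | h2 <;> rcases h2' with h2' | h2' <;> rw [h2] at h2' <;> omega
  exact kseq_strictMono.injective this

noncomputable def bfun (s : ℕ → H) (ρ0 : H → ℝ) (z : H × ℤ) : ℝ :=
  if h : Bf s z then (2⁻¹ : ℝ) ^ h.choose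
  else if z.2 = 0 then ρ0 z.1 else 1

noncomputable def phif (s : ℕ → H) (z : H × ℤ) : ℕ →₀ ℤ :=
  if h : Bf s z then Finsupp.single h.choose (if 0 < z.2 then 1 else -1) else 0

noncomputable def psif (s : ℕ → H) (z : H × ℤ) : H :=
  z.1 - Finsupp.linearCombination ℤ s (phif s z)

noncomputable def wf (s : ℕ → H) (z : H × ℤ) : ℝ :=
  if h : Bf s z then (2⁻¹ : ℝ) ^ h.choose else 0

lemma Bf_choose_eq {s : ℕ → H} {z : H × ℤ} (h : Bf s z) {j : ℕ}
    (hj : z = (s j, (kseq j : ℤ)) ∨ z = (-s j, -(kseq j : ℤ))) : h.choose = j :=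
  Bf_unique h.choose_spec hj

lemma not_Bf_of_snd_zero {s : ℕ → H} {z : H × ℤ} (hz : z.2 = 0) : ¬ Bf s z := by
  rintro ⟨j, hj | hj⟩ <;> rw [hj] at hz <;> simp at hz <;>
    exact absurd hz (by have := kseq_pos j; omega)

lemma bfun_eval {s : ℕ → H} {ρ0 : H → ℝ} {z : H × ℤ} {j : ℕ}
    (hj : z = (s j, (kseq j : ℤ)) ∨ z = (-s j, -(kseq j : ℤ))) :
    bfun s ρ0 z = (2⁻¹ : ℝ) ^ j := by
  have h : Bf s z := ⟨j, hj⟩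
  rw [bfun, dif_pos h, Bf_choose_eq h hj]

lemma wf_eval {s : ℕ → H} {z : H × ℤ} {j : ℕ}
    (hj : z = (s j, (kseq j : ℤ)) ∨ z = (-s j, -(kseq j : ℤ))) :
    wf s z = (2⁻¹ : ℝ) ^ j := by
  have h : Bf s z := ⟨j, hj⟩
  rw [wf, dif_pos h, Bf_choose_eq h hj]

lemma bfun_zero {s : ℕ → H} {ρ0 : H → ℝ} (g : H) : bfun s ρ0 (g, 0) = ρ0 g := by
  rw [bfun, dif_neg (not_Bf_of_snd_zero rfl)]
  simp

lemma phif_eval_pos {s : ℕ → H} (j : ℕ) :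
    phif s (s j, (kseq j : ℤ)) = Finsupp.single j 1 := by
  have hj : ((s j, (kseq j : ℤ)) : H × ℤ) = (s j, (kseq j : ℤ)) ∨
      ((s j, (kseq j : ℤ)) : H × ℤ) = (-s j, -(kseq j : ℤ)) := Or.inl rfl
  have h : Bf s (s j, (kseq j : ℤ)) := ⟨j, hj⟩
  rw [phif, dif_pos h, Bf_choose_eq h hj,
    if_pos (by simpa using (by exact_mod_cast kseq_pos j : (0:ℤ) < (kseq j:ℤ)))]

lemma phif_eval_neg {s : ℕ → H} (j : ℕ) :
    phif s (-s j, -(kseq j : ℤ)) = Finsupp.single j (-1) := by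
  have hj : ((-s j, -(kseq j : ℤ)) : H × ℤ) = (s j, (kseq j : ℤ)) ∨
      ((-s j, -(kseq j : ℤ)) : H × ℤ) = (-s j, -(kseq j : ℤ)) := Or.inr rfl
  have h : Bf s (-s j, -(kseq j : ℤ)) := ⟨j, hj⟩
  have : ¬ (0 : ℤ) < -(kseq j : ℤ) := by have := kseq_pos j; omega
  rw [phif, dif_pos h, Bf_choose_eq h hj, if_neg (by simpa using this)]

lemma phif_eval_notBf {s : ℕ → H} {z : H × ℤ} (h : ¬ Bf s z) : phif s z = 0 := by
  rw [phif, dif_neg h]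

lemma psif_eval_Bf {s : ℕ → H} {z : H × ℤ} (h : Bf s z) : psif s z = 0 := by
  obtain ⟨j, hj | hj⟩ := h <;> subst hj
  · rw [psif, phif_eval_pos, Finsupp.linearCombination_single, one_smul]
    simp
  · rw [psif, phif_eval_neg, Finsupp.linearCombination_single, neg_smul, one_smul]
    simp

lemma psif_eval_notBf {s : ℕ → H} {z : H × ℤ} (h : ¬ Bf s z) : psif s z = z.1 := by
  rw [psif, phif_eval_notBf h, map_zero, sub_zero]

lemma bfun_nonneg {s : ℕ → H} {ρ0 : H → ℝ} (hρ : ∀ g, 0 ≤ ρ0 g) (z : H × ℤ) :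
    0 ≤ bfun s ρ0 z := by
  rw [bfun]
  split_ifs with h h2
  · positivity
  · exact hρ _
  · norm_num

lemma bfun_le_one {s : ℕ → H} {ρ0 : H → ℝ} (hρ : ∀ g, ρ0 g ≤ 1) (z : H × ℤ) :
    bfun s ρ0 z ≤ 1 := by
  rw [bfun]
  split_ifs with h h2
  · exact pow_le_one₀ (by norm_num) (by norm_num)
  · exact hρ _
  · exact le_refl 1

lemma wf_nonneg (s : ℕ → H) (z : H × ℤ) : 0 ≤ wf s z := by
  rw [wf]
  split_ifs
  · positivity
  · exact le_refl (0:ℝ)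

lemma wf_le_bfun {s : ℕ → H} {ρ0 : H → ℝ} (hρ : ∀ g, 0 ≤ ρ0 g) (z : H × ℤ) :
    wf s z ≤ bfun s ρ0 z := by
  rw [wf, bfun]
  split_ifs with h h2
  · exact le_refl _
  · exact hρ _
  · norm_num

lemma bfun_neg {s : ℕ → H} {ρ0 : H → ℝ} (hρ : ∀ g, ρ0 (-g) = ρ0 g) (z : H × ℤ) :
    bfun s ρ0 (-z) = bfun s ρ0 z := by
  by_cases h : Bf s z
  · obtain ⟨j, hj⟩ := h
    have hnegj : -z = (s j, (kseq j : ℤ)) ∨ -z = (-s j, -(kseq j : ℤ)) := by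
      rcases hj with hj | hj <;> rw [hj]
      · right; rfl
      · left; simp [Prod.neg_mk]
    rw [bfun_eval hnegj, bfun_eval hj]
  · have hneg : ¬ Bf s (-z) := by
      rintro ⟨j, hj | hj⟩
      · exact h ⟨j, Or.inr (by
          have := congrArg (fun p : H × ℤ => -p) hj
          simpa using this)⟩
      · exact h ⟨j, Or.inl (by
          have := congrArg (fun p : H × ℤ => -p) hj
          simpa using this)⟩
    rw [bfun, bfun, dif_neg h, dif_neg hneg]
    rcases eq_or_ne z.2 0 with h2 | h2
    · rw [if_pos h2, if_pos (by simp [h2])]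
      show ρ0 (-z.1) = ρ0 z.1
      exact hρ _
    · rw [if_neg h2, if_neg (by simpa using h2)]

lemma list_sum_map_sub {α M : Type*} [AddCommGroup M] (F G : α → M) (l : List α) :
    (l.map (fun z => F z - G z)).sum = (l.map F).sum - (l.map G).sum := by
  induction l with
  | nil => simp
  | cons z l ih => simp [ih]; abel

lemma list_sum_map_neg {M : Type*} [AddCommGroup M] (l : List M) :
    (l.map (fun z => -z)).sum = -l.sum := by
  induction l with
  | nil => simp
  | cons z l ih => simp [ih]; abel

lemma rho0_list_sub {ρ0 : H → ℝ} (h0 : ρ0 0 = 0)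
    (hsub : ∀ a b, ρ0 (a + b) ≤ ρ0 a + ρ0 b) (L : List H) :
    ρ0 L.sum ≤ (L.map ρ0).sum := by
  induction L with
  | nil => simp [h0]
  | cons a L ih =>
      simp only [List.sum_cons, List.map_cons]
      exact (hsub a L.sum).trans (by linarith)

lemma phif_abs_le {s : ℕ → H} (J : ℕ) (z : H × ℤ) :
    (|phif s z J| : ℝ) * (2⁻¹ : ℝ) ^ J ≤ wf s z := by
  by_cases h : Bf s z
  · have hw : wf s z = (2⁻¹ : ℝ) ^ h.choose := wf_eval h.choose_spec
    have hφ : phif s z = Finsupp.single h.choose (if 0 < z.2 then 1 else -1) := by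
      rw [phif, dif_pos h]
    rw [hφ, hw, Finsupp.single_apply]
    by_cases hJ : h.choose = J
    · subst hJ
      rw [if_pos rfl]
      have : |((if 0 < z.2 then (1:ℤ) else -1 : ℤ) : ℝ)| = 1 := by
        split_ifs <;> simp
      rw [this, one_mul]
    · rw [if_neg hJ]
      simp
  · rw [phif_eval_notBf h]
    simpa using wf_nonneg s z

lemma abs_coeff_le_wsum (s : ℕ → H) (J : ℕ) (l : List (H × ℤ)) :
    (|((l.map (phif s)).sum) J| : ℝ) * (2⁻¹ : ℝ) ^ J ≤ (l.map (wf s)).sum := by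
  induction l with
  | nil => simp
  | cons z l ih =>
      simp only [List.map_cons, List.sum_cons, Finsupp.add_apply]
      set A := phif s z J
      set B := ((l.map (phif s)).sum) J
      have h1 : |((A + B : ℤ) : ℝ)| ≤ |(A : ℝ)| + |(B : ℝ)| := by
        push_cast
        exact abs_add_le _ _
      have hq : (0:ℝ) ≤ (2⁻¹ : ℝ) ^ J := by positivity
      have h2 := phif_abs_le (s := s) J z
      have hgoal : |((A + B : ℤ) : ℝ)| * (2⁻¹:ℝ) ^ J ≤ wf s z + (l.map (wf s)).sum := by
        calc |((A + B : ℤ) : ℝ)| * (2⁻¹:ℝ) ^ J ≤ (|(A : ℝ)| + |(B : ℝ)|) * (2⁻¹:ℝ) ^ J :=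
              mul_le_mul_of_nonneg_right h1 hq
          _ = |(A : ℝ)| * (2⁻¹:ℝ) ^ J + |(B : ℝ)| * (2⁻¹:ℝ) ^ J := by ring
          _ ≤ wf s z + (l.map (wf s)).sum := add_le_add h2 ih
      exact_mod_cast hgoal

lemma core (s : ℕ → H) (ρ0 : H → ℝ)
    (h0 : ρ0 0 = 0) (hnn : ∀ g, 0 ≤ ρ0 g)
    (hsub : ∀ a b, ρ0 (a + b) ≤ ρ0 a + ρ0 b) (hb1 : ∀ g, ρ0 g ≤ 1)
    (l : List (H × ℤ)) (hl : (l.sum).2 = 0) :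
    ρ0 (l.sum).1 ≤ (l.map (bfun s ρ0)).sum := by
  by_cases hbad : ∃ z ∈ l, ¬ Bf s z ∧ z.2 ≠ 0
  · obtain ⟨z, hzl, hzB, hz2⟩ := hbad
    have hz : bfun s ρ0 z = 1 := by rw [bfun, dif_neg hzB, if_neg hz2]
    have h1 : (1:ℝ) ≤ (l.map (bfun s ρ0)).sum := by
      rw [← hz]
      exact List.single_le_sum (fun r hr => by
        obtain ⟨y, _, rfl⟩ := List.mem_map.mp hr
        exact bfun_nonneg hnn y) _ (List.mem_map_of_mem hzl)
    exact (hb1 _).trans h1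
  · push_neg at hbad
    have htyped : ∀ z ∈ l, ¬ Bf s z → z.2 = 0 := hbad
    set c : ℕ →₀ ℤ := (l.map (phif s)).sum with hc_def
    have hc0 : Finsupp.linearCombination ℤ (fun j => (kseq j : ℤ)) c = 0 := by
      have hmap := map_list_sum
        (Finsupp.linearCombination ℤ (fun j => (kseq j : ℤ))).toAddMonoidHom
        (l.map (phif s))
      simp only [LinearMap.toAddMonoidHom_coe] at hmap
      rw [hc_def, hmap, List.map_map]
      have hpt : ∀ z ∈ l,
          (Finsupp.linearCombination ℤ (fun j => (kseq j : ℤ)) ∘ phif s) z = z.2 := by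
        intro z hz
        by_cases h : Bf s z
        · rcases h.choose_spec with hj | hj
          · simp only [Function.comp_apply]
            rw [show z = (s h.choose, (kseq h.choose : ℤ)) from hj, phif_eval_pos,
              Finsupp.linearCombination_single]
            simp
          · simp only [Function.comp_apply]
            rw [show z = (-s h.choose, -(kseq h.choose : ℤ)) from hj, phif_eval_neg,
              Finsupp.linearCombination_single]
            simp
        · simp only [Function.comp_apply]
          rw [phif_eval_notBf h, map_zero, htyped z hz h]
      rw [List.map_congr_left hpt]
      have := map_list_sum (AddMonoidHom.snd H ℤ) l
      simp only [AddMonoidHom.coe_snd] at this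
      rw [← this]
      exact hl
    have hψsum : (l.map (psif s)).sum = (l.sum).1 - Finsupp.linearCombination ℤ s c := by
      have h1 : (l.map (psif s)).sum =
          (l.map Prod.fst).sum - (l.map (fun z => Finsupp.linearCombination ℤ s (phif s z))).sum := by
        rw [← list_sum_map_sub]
        rfl
      rw [h1]
      congr 1
      · have := map_list_sum (AddMonoidHom.fst H ℤ) l
        simp only [AddMonoidHom.coe_fst] at this
        rw [← this]
      · have hmap := map_list_sum (Finsupp.linearCombination ℤ s).toAddMonoidHom (l.map (phif s))
        simp only [LinearMap.toAddMonoidHom_coe] at hmap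
        rw [hc_def, hmap, List.map_map]
        rfl
    by_cases hw : 1 ≤ (l.map (wf s)).sum
    · have h2 : (l.map (wf s)).sum ≤ (l.map (bfun s ρ0)).sum :=
        List.sum_le_sum (fun z _ => wf_le_bfun hnn z)
      exact (hb1 _).trans (hw.trans h2)
    · push_neg at hw
      have hcb : ∀ J, |c J| < 2 ^ J := by
        intro J
        have h1 := abs_coeff_le_wsum s J l
        rw [← hc_def] at h1
        have h2 : (|c J| : ℝ) * (2⁻¹ : ℝ) ^ J < 1 := lt_of_le_of_lt h1 hw
        have h3 : (|c J| : ℝ) < 2 ^ J := by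
          have hpow : (2⁻¹ : ℝ) ^ J = ((2:ℝ) ^ J)⁻¹ := by
            rw [inv_pow]
          rw [hpow] at h2
          have h2pos : (0:ℝ) < (2:ℝ) ^ J := by positivity
          calc (|c J| : ℝ) = (|c J| : ℝ) * ((2:ℝ)^J)⁻¹ * (2:ℝ)^J := by
                field_simp
            _ < 1 * (2:ℝ)^J := by
                exact mul_lt_mul_of_pos_right h2 h2pos
            _ = (2:ℝ)^J := one_mul _
        exact_mod_cast h3
      have hczero : c = 0 := cancel c hcb hc0
      have hψ : (l.map (psif s)).sum = (l.sum).1 := by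
        rw [hψsum, hczero, map_zero, sub_zero]
      calc ρ0 (l.sum).1 = ρ0 ((l.map (psif s)).sum) := by rw [hψ]
        _ ≤ ((l.map (psif s)).map ρ0).sum := rho0_list_sub h0 hsub _
        _ = (l.map (fun z => ρ0 (psif s z))).sum := by rw [List.map_map]; rfl
        _ ≤ (l.map (bfun s ρ0)).sum := by
            apply List.sum_le_sum
            intro z hz
            by_cases h : Bf s z
            · rw [psif_eval_Bf h, h0]
              exact bfun_nonneg hnn z
            · rw [psif_eval_notBf h]
              have h2 := htyped z hz h
              have : bfun s ρ0 z = ρ0 z.1 := by rw [bfun, dif_neg h, if_pos h2]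
              rw [this]

end Aux

/-- The topology generated by a family of pseudometrics: the coarsest topology containing
all pseudometric balls (so basic open sets are finite intersections of balls). -/
def pseudometricFamilyTopology {X I : Type*} (ρ : I → X → X → ℝ) : TopologicalSpace X :=
  TopologicalSpace.generateFrom
    {s | ∃ (α : I) (x : X) (ε : ℝ), 0 < ε ∧ s = {y | ρ α x y < ε}}

/-- If `(ρ α)` is a family of invariant pseudometrics bounded by `1` on a
countable abelian group `H`, generating a group topology on `H`, then there is a family
`(D α)` of invariant pseudometrics bounded by `1` on `H × ℤ`, with `D α` extending `ρ α`,
such that the cyclic subgroup `{(0, n) : n ∈ ℤ}` is dense in the topology generated by the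
family `(D α)`. -/
theorem pseudometric_family_extends_to_dense_cyclic
    (H : Type*) [AddCommGroup H] [Countable H]
    (I : Type*) (ρ : I → H → H → ℝ)
    (hnonneg : ∀ α x y, 0 ≤ ρ α x y)
    (hrefl : ∀ α x, ρ α x x = 0)
    (hsymm : ∀ α x y, ρ α x y = ρ α y x)
    (htri : ∀ α x y z, ρ α x z ≤ ρ α x y + ρ α y z)
    (hinv : ∀ α (a x y : H), ρ α (a + x) (a + y) = ρ α x y)
    (hbdd : ∀ α x y, ρ α x y ≤ 1)
    (hgrp : @IsTopologicalAddGroup H (pseudometricFamilyTopology ρ) _) :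
    ∃ D : I → (H × ℤ) → (H × ℤ) → ℝ,
      (∀ α x y, 0 ≤ D α x y) ∧
      (∀ α x, D α x x = 0) ∧
      (∀ α x y, D α x y = D α y x) ∧
      (∀ α x y z, D α x z ≤ D α x y + D α y z) ∧
      (∀ α (a x y : H × ℤ), D α (a + x) (a + y) = D α x y) ∧
      (∀ α x y, D α x y ≤ 1) ∧
      (∀ α (g h : H), D α (g, 0) (h, 0) = ρ α g h) ∧
      @Dense (H × ℤ) (pseudometricFamilyTopology D)
        (Set.range fun n : ℤ => ((0 : H), n)) := by
  classical
  obtain ⟨e, he⟩ := exists_surjective_nat H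
  set s : ℕ → H := fun j => e (Nat.unpair j).1 with hs_def
  have hs : ∀ (g : H) (J : ℕ), ∃ j, J ≤ j ∧ s j = g := by
    intro g J
    obtain ⟨m, hm⟩ := he g
    refine ⟨Nat.pair m J, Nat.right_le_pair m J, ?_⟩
    simp [hs_def, Nat.unpair_pair, hm]
  have hρ00 : ∀ α, ρ α 0 0 = 0 := fun α => hrefl α 0
  have hρ0inv : ∀ α (g h : H), ρ α 0 (h - g) = ρ α g h := by
    intro α g h
    have h1 := hinv α g 0 (h - g)
    rw [add_zero, add_sub_cancel] at h1
    exact h1.symm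
  have hρ0neg : ∀ α (g : H), ρ α 0 (-g) = ρ α 0 g := by
    intro α g
    have h1 := hinv α g 0 (-g)
    rw [add_zero, add_neg_cancel] at h1
    rw [← h1, hsymm]
  have hρ0sub : ∀ α (a b : H), ρ α 0 (a + b) ≤ ρ α 0 a + ρ α 0 b := by
    intro α a b
    have h1 := htri α 0 a (a + b)
    have h2 := hinv α a 0 b
    rw [add_zero] at h2
    calc ρ α 0 (a + b) ≤ ρ α 0 a + ρ α a (a + b) := h1
      _ = ρ α 0 a + ρ α 0 b := by rw [h2]
  set S : I → (H × ℤ) → Set ℝ :=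
    fun α v => {r | ∃ l : List (H × ℤ), l.sum = v ∧ r = (l.map (bfun s (ρ α 0))).sum}
    with hS_def
  have hSmem : ∀ α v (l : List (H × ℤ)), l.sum = v →
      (l.map (bfun s (ρ α 0))).sum ∈ S α v := fun α v l hl => ⟨l, hl, rfl⟩
  have hSne : ∀ α v, (S α v).Nonempty := fun α v => ⟨_, hSmem α v [v] (by simp)⟩
  have hSnn : ∀ α v, ∀ r ∈ S α v, 0 ≤ r := by
    rintro α v r ⟨l, hl, rfl⟩
    apply List.sum_nonneg
    intro x hx
    obtain ⟨y, _, rfl⟩ := List.mem_map.mp hx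
    exact bfun_nonneg (fun g => hnonneg α 0 g) y
  have hSbdd : ∀ α v, BddBelow (S α v) := fun α v => ⟨0, fun r hr => hSnn α v r hr⟩
  set N : I → (H × ℤ) → ℝ := fun α v => sInf (S α v) with hN_def
  have hN0 : ∀ α v, 0 ≤ N α v := fun α v => le_csInf (hSne α v) (hSnn α v)
  have hNle : ∀ α v (l : List (H × ℤ)), l.sum = v →
      N α v ≤ (l.map (bfun s (ρ α 0))).sum :=
    fun α v l hl => csInf_le (hSbdd α v) (hSmem α v l hl)
  have hNb : ∀ α v, N α v ≤ bfun s (ρ α 0) v := by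
    intro α v
    have h1 := hNle α v [v] (by simp)
    simpa using h1
  have hNzero : ∀ α, N α 0 = 0 := by
    intro α
    refine le_antisymm ?_ (hN0 α 0)
    have h1 := hNle α 0 [] (by simp)
    simpa using h1
  have hNadd : ∀ α u v, N α (u + v) ≤ N α u + N α v := by
    intro α u v
    have key : ∀ r1 ∈ S α u, ∀ r2 ∈ S α v, N α (u + v) ≤ r1 + r2 := by
      rintro r1 ⟨l1, h11, rfl⟩ r2 ⟨l2, h21, rfl⟩
      have h1 := hNle α (u + v) (l1 ++ l2) (by rw [List.sum_append, h11, h21])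
      rw [List.map_append, List.sum_append] at h1
      exact h1
    have h2 : ∀ r2 ∈ S α v, N α (u + v) - N α u ≤ r2 := by
      intro r2 hr2
      have h3 : N α (u + v) - r2 ≤ N α u :=
        le_csInf (hSne α u) (fun r1 hr1 => by have := key r1 hr1 r2 hr2; linarith)
      linarith
    have h4 : N α (u + v) - N α u ≤ N α v := le_csInf (hSne α v) h2
    linarith
  have hSneg : ∀ α v, S α v ⊆ S α (-v) := by
    rintro α v r ⟨l, hl, rfl⟩
    refine ⟨l.map (fun z => -z), by rw [list_sum_map_neg, hl], ?_⟩
    rw [List.map_map]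
    apply congrArg
    apply List.map_congr_left
    intro z _
    exact (bfun_neg (hρ0neg α) z).symm
  have hNneg : ∀ α v, N α (-v) = N α v := by
    intro α v
    apply le_antisymm
    · exact le_csInf (hSne α v) (fun r hr => csInf_le (hSbdd α (-v)) (hSneg α v hr))
    · refine le_csInf (hSne α (-v)) (fun r hr => csInf_le (hSbdd α v) ?_)
      have h1 := hSneg α (-v) hr
      rwa [neg_neg] at h1
  have hNlow : ∀ α (v : H × ℤ), v.2 = 0 → ρ α 0 v.1 ≤ N α v := by
    intro α v hv
    refine le_csInf (hSne α v) ?_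
    rintro r ⟨l, hl, rfl⟩
    have h1 := core s (ρ α 0) (hρ00 α) (fun g => hnonneg α 0 g) (hρ0sub α)
      (fun g => hbdd α 0 g) l (by rw [hl]; exact hv)
    rw [hl] at h1
    exact h1
  refine ⟨fun α x y => N α (y - x), fun α x y => hN0 α _, ?_, ?_, ?_, ?_, ?_, ?_, ?_⟩
  · intro α x
    show N α (x - x) = 0
    rw [sub_self]
    exact hNzero α
  · intro α x y
    show N α (y - x) = N α (x - y)
    have h1 := hNneg α (x - y)
    rw [neg_sub] at h1
    exact h1
  · intro α x y z
    show N α (z - x) ≤ N α (y - x) + N α (z - y)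
    have h1 := hNadd α (y - x) (z - y)
    rw [show (y - x) + (z - y) = z - x by abel] at h1
    exact h1
  · intro α a x y
    show N α ((a + y) - (a + x)) = N α (y - x)
    rw [show (a + y) - (a + x) = y - x by abel]
  · intro α x y
    show N α (y - x) ≤ 1
    exact (hNb α (y - x)).trans (bfun_le_one (fun g => hbdd α 0 g) _)
  · intro α g h
    have hsub2 : ((h, (0:ℤ)) : H × ℤ) - (g, 0) = (h - g, 0) := by
      ext <;> simp
    show N α ((h, (0:ℤ)) - (g, 0)) = ρ α g h
    rw [hsub2, ← hρ0inv α g h]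
    refine le_antisymm ?_ (hNlow α (h - g, 0) rfl)
    have h1 := hNb α (h - g, 0)
    rwa [bfun_zero] at h1
  · -- density
    letI T : TopologicalSpace (H × ℤ) :=
      pseudometricFamilyTopology (fun α (x y : H × ℤ) => N α (y - x))
    set Sb : Set (Set (H × ℤ)) :=
      {u | ∃ (α : I) (x : H × ℤ) (ε : ℝ), 0 < ε ∧ u = {y | N α (y - x) < ε}} with hSb_def
    have hbasis : TopologicalSpace.IsTopologicalBasis (t := T)
        ((fun f => ⋂₀ f) '' { f : Set (Set (H × ℤ)) | f.Finite ∧ f ⊆ Sb }) :=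
      TopologicalSpace.isTopologicalBasis_of_subbasis rfl
    rw [hbasis.dense_iff]
    rintro o ⟨f, ⟨hffin, hfsub⟩, rfl⟩ ⟨x, hx⟩
    have hδex : ∀ (f : Set (Set (H × ℤ))), f.Finite → f ⊆ Sb → x ∈ ⋂₀ f →
        ∃ δ > 0, ∀ y : H × ℤ, (∀ α, N α (y - x) < δ) → y ∈ ⋂₀ f := by
      intro f hf
      refine Set.Finite.induction_on f hf ?_ ?_
      · intro _ _
        exact ⟨1, one_pos, fun y _ => by simp⟩
      · intro a f' ha hf' ih hsub hx'
        have hsub' : f' ⊆ Sb := fun u hu => hsub (Set.mem_insert_of_mem _ hu)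
        have hx'' : x ∈ ⋂₀ f' := fun u hu => hx' u (Set.mem_insert_of_mem _ hu)
        obtain ⟨δ1, hδ1, h1⟩ := ih hsub' hx''
        obtain ⟨α₀, x₀, ε₀, hε₀, ha_eq⟩ := hsub (Set.mem_insert a f')
        have hxa : x ∈ a := hx' a (Set.mem_insert a f')
        rw [ha_eq] at hxa
        have hxa' : N α₀ (x - x₀) < ε₀ := hxa
        refine ⟨min δ1 (ε₀ - N α₀ (x - x₀)), lt_min hδ1 (by linarith), ?_⟩
        intro y hy u hu
        rcases Set.mem_insert_iff.mp hu with rfl | hu'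
        · rw [ha_eq]
          have htr := hNadd α₀ (x - x₀) (y - x)
          rw [show (x - x₀) + (y - x) = y - x₀ by abel] at htr
          have hlt : N α₀ (y - x) < ε₀ - N α₀ (x - x₀) :=
            lt_of_lt_of_le (hy α₀) (min_le_right _ _)
          show N α₀ (y - x₀) < ε₀
          linarith
        · exact h1 y (fun α => lt_of_lt_of_le (hy α) (min_le_left _ _)) u hu'
    obtain ⟨δ, hδpos, hδ⟩ := hδex f hffin hfsub hx
    obtain ⟨J, hJ⟩ : ∃ J : ℕ, (2⁻¹ : ℝ) ^ J < δ :=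
      exists_pow_lt_of_lt_one hδpos (by norm_num)
    obtain ⟨j, hjJ, hj⟩ := hs (-(x.1)) J
    refine ⟨((0 : H), x.2 + (kseq j : ℤ)), ?_, ⟨x.2 + (kseq j : ℤ), rfl⟩⟩
    apply hδ
    intro α
    have hsum : (((0 : H), x.2 + (kseq j : ℤ)) : H × ℤ) - x = (s j, (kseq j : ℤ)) := by
      ext <;> simp [hj]
    rw [hsum]
    have h1 : N α (s j, (kseq j : ℤ)) ≤ (2⁻¹ : ℝ) ^ j := by
      have h2 := hNb α (s j, (kseq j : ℤ))
      rwa [bfun_eval (Or.inl rfl)] at h2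
    have h2 : (2⁻¹ : ℝ) ^ j ≤ (2⁻¹ : ℝ) ^ J :=
      pow_le_pow_of_le_one (by norm_num) (by norm_num) hjJ
    linarith
end

section
/- Equip ℤ × ℤ with the ℓ¹ metric d((a,b),(a',b')) = |a−a'| + |b−b'| (the restriction of the ℓ¹ norm on ℝ²). Then there is NO invariant metric D on the product group (ℤ × ℤ) × ℤ satisfying D((a,b,0),(a',b',0)) = |a−a'| + |b−b'| for all a,b,a',b' ∈ ℤ and such that the cyclic subgroup {(0,0,n) : n ∈ ℤ} generated by (0,0,1) is dense in (ℤ × ℤ) × ℤ with respect to the topology induced by D. (Hence the boundedness assumption in the embedding theorem for monothetic groups is essential.) -/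
/-- There is no invariant metric `D` on `(ℤ × ℤ) × ℤ` extending the ℓ¹
metric on `ℤ × ℤ` (embedded as `(ℤ × ℤ) × {0}`) for which the cyclic subgroup
`{((0,0), n) : n ∈ ℤ}` is dense. Hence boundedness is essential in the embedding theorem
for monothetic groups. -/
theorem no_unbounded_extension_with_dense_cyclic :
    ¬ ∃ D : (ℤ × ℤ) × ℤ → (ℤ × ℤ) × ℤ → ℝ,
      (∀ x y, 0 ≤ D x y) ∧
      (∀ x y, D x y = 0 ↔ x = y) ∧
      (∀ x y, D x y = D y x) ∧
      (∀ x y z, D x z ≤ D x y + D y z) ∧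
      (∀ a x y, D (a + x) (a + y) = D x y) ∧
      (∀ a b a' b' : ℤ, D ((a, b), 0) ((a', b'), 0) = |(a : ℝ) - a'| + |(b : ℝ) - b'|) ∧
      (∀ p : (ℤ × ℤ) × ℤ, ∀ ε > (0 : ℝ), ∃ n : ℤ, D ((0, 0), n) p < ε) := by
  rintro ⟨D, hpos, heq, hsymm, htri, hinv, hext, hdense⟩
  set g : (ℤ × ℤ) × ℤ → ℝ := fun x => D x 0 with hg
  have g0 : g 0 = 0 := (heq 0 0).mpr rfl
  have gneg : ∀ x, g (-x) = g x := by
    intro x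
    have h := hinv x (-x) 0
    simp only [add_neg_cancel, add_zero] at h
    show D (-x) 0 = D x 0
    rw [← h, hsymm]
  have gadd : ∀ x y, g (x + y) ≤ g x + g y := by
    intro x y
    have h1 : D (x + y) y = D x 0 := by
      have := hinv y x 0
      simpa [add_comm] using this
    calc D (x + y) 0 ≤ D (x + y) y + D y 0 := htri _ _ _
      _ = D x 0 + D y 0 := by rw [h1]
  have gpos : ∀ x, 0 ≤ g x := fun x => hpos x 0
  have gnsmul : ∀ (n : ℕ) (x : (ℤ × ℤ) × ℤ), g (n • x) ≤ n * g x := by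
    intro n x
    induction n with
    | zero => simp [g0]
    | succ k ih =>
        have : g ((k + 1 : ℕ) • x) ≤ g (k • x) + g x := by
          rw [add_nsmul, one_nsmul]; exact gadd _ _
        push_cast
        nlinarith [gpos x]
  have gzsmul : ∀ (n : ℤ) (x : (ℤ × ℤ) × ℤ), g (n • x) ≤ |(n : ℝ)| * g x := by
    intro n x
    rcases le_or_gt 0 n with h | h
    · lift n to ℕ using h
      simpa using gnsmul n x
    · have hn : (0:ℤ) ≤ -n := by omega
      lift (-n) to ℕ using hn with m hm
      have hx : n • x = -((m : ℤ) • x) := by rw [← neg_smul]; congr 1; omega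
      rw [hx, gneg]
      have := gnsmul m x
      have habs : |(n : ℝ)| = (m : ℝ) := by
        rw [abs_of_neg (by exact_mod_cast h)]
        exact_mod_cast (congrArg (fun z : ℤ => (z : ℝ)) hm).symm
      rw [habs]
      simpa using this
  -- density at ((1,0),0) and ((0,1),0)
  obtain ⟨p, hp⟩ := hdense ((1, 0), 0) (1/2) (by norm_num)
  obtain ⟨q, hq⟩ := hdense ((0, 1), 0) (1/2) (by norm_num)
  have hp' : g ((-1, 0), p) < 1/2 := by
    have h := hinv ((1, 0), 0) ((-1, 0), p) 0
    have harg : (((1, 0), 0) + ((-1, 0), p) : (ℤ × ℤ) × ℤ) = ((0, 0), p) := by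
      simp [Prod.ext_iff]
    rw [harg, add_zero] at h
    show D ((-1, 0), p) 0 < 1/2
    rw [← h]; exact hp
  have hq' : g ((0, -1), q) < 1/2 := by
    have h := hinv ((0, 1), 0) ((0, -1), q) 0
    have harg : (((0, 1), 0) + ((0, -1), q) : (ℤ × ℤ) × ℤ) = ((0, 0), q) := by
      simp [Prod.ext_iff]
    rw [harg, add_zero] at h
    show D ((0, -1), q) 0 < 1/2
    rw [← h]; exact hq
  -- g on the embedded ℤ × ℤ is the ℓ¹ norm
  have gl1 : ∀ a b : ℤ, g ((a, b), 0) = |(a : ℝ)| + |(b : ℝ)| := by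
    intro a b
    have := hext a b 0 0
    show D ((a, b), 0) ((0,0),0) = _
    rw [this]; push_cast
    simp
  -- key estimate
  have hrep : ∀ a b : ℤ, (((-a, -b), a * p + b * q) : (ℤ × ℤ) × ℤ)
      = a • (((-1, 0), p) : (ℤ × ℤ) × ℤ) + b • (((0, -1), q) : (ℤ × ℤ) × ℤ) := by
    intro a b
    simp [Prod.ext_iff, smul_eq_mul, mul_comm]
  have hsmallpart : ∀ a b : ℤ, g ((-a, -b), a * p + b * q) ≤ (|(a : ℝ)| + |(b : ℝ)|) * (1/2) := by
    intro a b
    rw [hrep a b]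
    calc g (a • (((-1, 0), p) : (ℤ × ℤ) × ℤ) + b • (((0, -1), q) : (ℤ × ℤ) × ℤ))
        ≤ g (a • (((-1, 0), p) : (ℤ × ℤ) × ℤ)) + g (b • (((0, -1), q) : (ℤ × ℤ) × ℤ)) :=
          gadd _ _
      _ ≤ |(a : ℝ)| * g ((-1, 0), p) + |(b : ℝ)| * g ((0, -1), q) :=
          add_le_add (gzsmul a _) (gzsmul b _)
      _ ≤ (|(a : ℝ)| + |(b : ℝ)|) * (1/2) := by
          nlinarith [abs_nonneg (a : ℝ), abs_nonneg (b : ℝ), hp', hq',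
            gpos (((-1, 0), p) : (ℤ × ℤ) × ℤ), gpos (((0, -1), q) : (ℤ × ℤ) × ℤ)]
  have hlow : ∀ a b : ℤ, (|(a : ℝ)| + |(b : ℝ)|)
      ≤ g ((0, 0), a * p + b * q) + (|(a : ℝ)| + |(b : ℝ)|) * (1/2) := by
    intro a b
    have hsum : (((a, b), 0) : (ℤ × ℤ) × ℤ)
        = (((0, 0), a * p + b * q) : (ℤ × ℤ) × ℤ) + (-(((-a, -b), a * p + b * q))) := by
      simp [Prod.ext_iff]
    calc (|(a : ℝ)| + |(b : ℝ)|) = g ((a, b), 0) := (gl1 a b).symm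
      _ = g ((((0, 0), a * p + b * q) : (ℤ × ℤ) × ℤ) + (-(((-a, -b), a * p + b * q)))) := by
          rw [← hsum]
      _ ≤ g ((0, 0), a * p + b * q) + g (-(((-a, -b), a * p + b * q))) := gadd _ _
      _ = g ((0, 0), a * p + b * q) + g ((-a, -b), a * p + b * q) := by rw [gneg]
      _ ≤ g ((0, 0), a * p + b * q) + (|(a : ℝ)| + |(b : ℝ)|) * (1/2) := by
          linarith [hsmallpart a b]
  -- apply with a = q, b = -p: then a*p + b*q = 0
  have hzero : q * p + (-p) * q = 0 := by ring
  have hkey := hlow q (-p)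
  rw [hzero] at hkey
  have hg00 : g (((0, 0), 0) : (ℤ × ℤ) × ℤ) = 0 := g0
  rw [hg00] at hkey
  -- hence |q| + |p| ≤ (|q|+|p|)/2, so p = q = 0
  have hp0 : p = 0 := by
    have h2 := abs_nonneg ((q : ℤ) : ℝ)
    have h3 := abs_nonneg (((-p : ℤ) : ℤ) : ℝ)
    have habs : |(((-p : ℤ) : ℤ) : ℝ)| = 0 := by linarith
    have h4 : (((-p : ℤ) : ℤ) : ℝ) = 0 := abs_eq_zero.mp habs
    have h5 : (-p : ℤ) = 0 := by exact_mod_cast h4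
    omega
  -- but then D((0,0,0),((1,0),0)) = 1 < 1/2, contradiction
  rw [hp0] at hp'
  rw [gl1 (-1) 0] at hp'
  norm_num at hp'
end

section
/- Let D be an invariant metric on the product group (ℤ × ℤ) × ℤ such that D((a,b,0),(0,0,0)) = |a| + |b| for all a,b ∈ ℤ. Then for all integers m, n: |m| + |n| ≤ |m| · D((1,0,0),(0,0,n)) + |n| · D((0,1,0),(0,0,m)). -/
/-!
A left-invariant metric `D` on an abelian group is determined by the group seminorm
`‖x‖ = D x 0`, and then `‖k • x‖ ≤ |k| ‖x‖`. With `u = e₁ - cⁿ` and `v = e₂ - cᵐ` the cyclic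
parts cancel in `m • u - n • v = (m, -n, 0)`, whose norm is `|m| + |n|` by the hypothesis on
`ℤ² × {0}`; bounding it by `|m| ‖u‖ + |n| ‖v‖` is the claim, as `‖u‖ = D(e₁, cⁿ)` and
`‖v‖ = D(e₂, cᵐ)`.
-/

namespace AddGroupSeminorm

variable {G : Type*} [AddGroup G] (D : G → G → ℝ) (hself : ∀ x, D x x = 0)
  (hsymm : ∀ x y, D x y = D y x) (htri : ∀ x y z, D x z ≤ D x y + D y z)
  (hinv : ∀ a x y, D (a + x) (a + y) = D x y)

def ofInvariantDist : AddGroupSeminorm G where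
  toFun x := D x 0
  map_zero' := hself 0
  add_le' r s := by
    calc D (r + s) 0 ≤ D (r + s) (r + 0) + D r 0 := by simpa only [add_zero] using htri _ _ _
      _ = D s 0 + D r 0 := by rw [hinv]
      _ = D r 0 + D s 0 := add_comm _ _
  neg' r := by
    calc D (-r) 0 = D (r + -r) (r + 0) := (hinv _ _ _).symm
      _ = D r 0 := by rw [add_neg_cancel, add_zero, hsymm]

theorem ofInvariantDist_apply (x : G) :
    ofInvariantDist D hself hsymm htri hinv x = D x 0 := rfl

theorem ofInvariantDist_neg_add (x y : G) :
    ofInvariantDist D hself hsymm htri hinv (-y + x) = D x y := by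
  rw [ofInvariantDist_apply, ← neg_add_cancel y, hinv]

theorem apply_zsmul_le {A : Type*} [AddCommGroup A] (p : AddGroupSeminorm A) (k : ℤ) (x : A) :
    p (k • x) ≤ |(k : ℝ)| * p x := by
  let := p.toSeminormedAddCommGroup
  rw [← Int.norm_eq_abs]
  exact norm_zsmul_le k x

end AddGroupSeminorm

theorem l1_lower_bound_for_invariant_extension_general
    (D : (ℤ × ℤ) × ℤ → (ℤ × ℤ) × ℤ → ℝ)
    (hzero : ∀ x y, D x y = 0 ↔ x = y)
    (hsymm : ∀ x y, D x y = D y x)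
    (htri : ∀ x y z, D x z ≤ D x y + D y z)
    (hinv : ∀ a x y, D (a + x) (a + y) = D x y)
    (hext : ∀ a b : ℤ, D ((a, b), 0) ((0, 0), 0) = |(a : ℝ)| + |(b : ℝ)|) :
    ∀ m n : ℤ,
      (|m| : ℝ) + (|n| : ℝ) ≤
        (|m| : ℝ) * D ((1, 0), 0) ((0, 0), n) + (|n| : ℝ) * D ((0, 1), 0) ((0, 0), m) := by
  intro m n
  set N := AddGroupSeminorm.ofInvariantDist D (fun x => (hzero x x).2 rfl) hsymm htri hinv
  have hN (x y : (ℤ × ℤ) × ℤ) : N (x - y) = D x y := by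
    rw [← neg_add_eq_sub]; exact AddGroupSeminorm.ofInvariantDist_neg_add ..
  set u : (ℤ × ℤ) × ℤ := ((1, 0), 0) - ((0, 0), n)
  set v : (ℤ × ℤ) × ℤ := ((0, 1), 0) - ((0, 0), m)
  have hcancel : m • u - n • v = ((m, -n), 0) - ((0, 0), 0) := by
    simp [u, v, mul_comm]
  calc (|m| : ℝ) + (|n| : ℝ) = N (m • u - n • v) := by
        rw [hcancel, hN, hext, Int.cast_neg, abs_neg]
    _ ≤ N (m • u) + N (n • v) := map_sub_le_add N _ _
    _ ≤ |(m : ℝ)| * N u + |(n : ℝ)| * N v :=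
        add_le_add (N.apply_zsmul_le _ _) (N.apply_zsmul_le _ _)
    _ = _ := by rw [hN, hN]

/-- If `D` is an invariant metric on `(ℤ × ℤ) × ℤ` whose restriction to
`ℤ² × {0}` is the ℓ¹ norm, then for all integers `m, n`:
`|m| + |n| ≤ |m| · D(e₁, cⁿ) + |n| · D(e₂, cᵐ)`, where `e₁ = ((1,0),0)`, `e₂ = ((0,1),0)`
and `cᵏ = ((0,0),k)`. -/
theorem l1_lower_bound_for_invariant_extension
    (D : (ℤ × ℤ) × ℤ → (ℤ × ℤ) × ℤ → ℝ)
    (hnonneg : ∀ x y, 0 ≤ D x y)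
    (hzero : ∀ x y, D x y = 0 ↔ x = y)
    (hsymm : ∀ x y, D x y = D y x)
    (htri : ∀ x y z, D x z ≤ D x y + D y z)
    (hinv : ∀ a x y, D (a + x) (a + y) = D x y)
    (hext : ∀ a b : ℤ, D ((a, b), 0) ((0, 0), 0) = |(a : ℝ)| + |(b : ℝ)|) :
    ∀ m n : ℤ,
      (|m| : ℝ) + (|n| : ℝ) ≤
        (|m| : ℝ) * D ((1, 0), 0) ((0, 0), n) + (|n| : ℝ) * D ((0, 1), 0) ((0, 0), m) :=
  l1_lower_bound_for_invariant_extension_general D hzero hsymm htri hinv hext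
end

section
/- Let D be an invariant metric on the product group (ℤ × ℤ) × ℤ such that D((a,b,0),(0,0,0)) = |a| + |b| for all a,b ∈ ℤ. Then it is impossible that both of the following hold: there exists n ∈ ℤ with D((0,0,n),(1,0,0)) < 1/2, and there exists m ∈ ℤ with D((0,1,0),(0,0,m)) < 1/2. In other words, the two elements (1,0,0) and (0,1,0) cannot both lie within distance 1/2 of the cyclic subgroup {(0,0,k) : k ∈ ℤ}. -/
/-!
The length `p z := D z 0` is a group seminorm, so `p (k • z) ≤ |k| * p z`. If
`u = e₁ - n e₃` and `v = e₂ - m e₃` both had length `< 1/2`, then `m • u - n • v = m e₁ - n e₂`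
would give `|m| + |n| ≤ (|m| + |n|) / 2`, forcing `n = 0`; but then `u = e₁` has length `1`.
-/

section InvariantDist

variable {G : Type*} [AddGroup G] {D : G → G → ℝ}

theorem invariant_dist_eq_neg_add_zero (hinv : ∀ a x y, D (a + x) (a + y) = D x y) (x y : G) :
    D x y = D (-y + x) 0 := by
  simpa using hinv y (-y + x) 0

def AddGroupSeminorm.ofInvariantDist_s8 (D : G → G → ℝ) (hself : ∀ x, D x x = 0) (hsymm : ∀ x y, D x y = D y x)
    (htri : ∀ x y z, D x z ≤ D x y + D y z) (hinv : ∀ a x y, D (a + x) (a + y) = D x y) :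
    AddGroupSeminorm G where
  toFun z := D z 0
  map_zero' := hself 0
  add_le' z w := by
    calc D (z + w) 0 ≤ D (z + w) z + D z 0 := htri _ _ _
      _ = D z 0 + D w 0 := by
        rw [invariant_dist_eq_neg_add_zero hinv (z + w) z, neg_add_cancel_left, add_comm]
  neg' z := by
    rw [← hinv z (-z) 0, add_neg_cancel, add_zero, hsymm]

@[simp]
theorem AddGroupSeminorm.ofInvariantDist_apply_s8 (hself : ∀ x, D x x = 0) (hsymm : ∀ x y, D x y = D y x)
    (htri : ∀ x y z, D x z ≤ D x y + D y z) (hinv : ∀ a x y, D (a + x) (a + y) = D x y) (z : G) :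
    ofInvariantDist_s8 D hself hsymm htri hinv z = D z 0 :=
  rfl

end InvariantDist

namespace AddGroupSeminorm

theorem zsmul_le {G : Type*} [AddCommGroup G] (p : AddGroupSeminorm G) (k : ℤ) (z : G) :
    p (k • z) ≤ |(k : ℝ)| * p z := by
  let := p.toSeminormedAddCommGroup
  rw [← Int.norm_eq_abs]
  exact norm_zsmul_le k z

theorem not_both_lt_half_of_restrict_eq_l1 (p : AddGroupSeminorm ((ℤ × ℤ) × ℤ))
    (hp : ∀ a b : ℤ, p ((a, b), 0) = |(a : ℝ)| + |(b : ℝ)|) (n m : ℤ) :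
    ¬ (p ((1, 0), n) < 1 / 2 ∧ p ((0, 1), m) < 1 / 2) := by
  rintro ⟨hu, hv⟩
  have hcomb : m • (((1, 0), n) : (ℤ × ℤ) × ℤ) - n • ((0, 1), m) = ((m, -n), 0) := by
    ext <;> simp [mul_comm]
  have hbound : |(m : ℝ)| + |(n : ℝ)| ≤ |(m : ℝ)| * (1 / 2) + |(n : ℝ)| * (1 / 2) :=
    calc |(m : ℝ)| + |(n : ℝ)| = p ((m, -n), 0) := by rw [hp, Int.cast_neg, abs_neg]
      _ ≤ p (m • ((1, 0), n)) + p (n • ((0, 1), m)) := hcomb ▸ map_sub_le_add p _ _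
      _ ≤ |(m : ℝ)| * p ((1, 0), n) + |(n : ℝ)| * p ((0, 1), m) :=
        add_le_add (p.zsmul_le _ _) (p.zsmul_le _ _)
      _ ≤ |(m : ℝ)| * (1 / 2) + |(n : ℝ)| * (1 / 2) := by gcongr
  have hn : n = 0 := by
    exact_mod_cast abs_nonpos_iff.mp (by linarith [abs_nonneg (m : ℝ)] : |(n : ℝ)| ≤ 0)
  subst hn
  norm_num [hp] at hu

end AddGroupSeminorm

theorem not_both_close_to_cyclic_subgroup_general
    (D : (ℤ × ℤ) × ℤ → (ℤ × ℤ) × ℤ → ℝ)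
    (hzero : ∀ x y, D x y = 0 ↔ x = y)
    (hsymm : ∀ x y, D x y = D y x)
    (htri : ∀ x y z, D x z ≤ D x y + D y z)
    (hinv : ∀ a x y, D (a + x) (a + y) = D x y)
    (hext : ∀ a b : ℤ, D ((a, b), 0) ((0, 0), 0) = |(a : ℝ)| + |(b : ℝ)|) :
    ¬ ((∃ n : ℤ, D ((0, 0), n) ((1, 0), 0) < 1 / 2) ∧
       (∃ m : ℤ, D ((0, 1), 0) ((0, 0), m) < 1 / 2)) := by
  rintro ⟨⟨n, hn⟩, ⟨m, hm⟩⟩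
  let p := AddGroupSeminorm.ofInvariantDist_s8 D (fun x => (hzero x x).mpr rfl) hsymm htri hinv
  refine p.not_both_lt_half_of_restrict_eq_l1 hext (-n) (-m) ⟨?_, ?_⟩
  · rw [hsymm, invariant_dist_eq_neg_add_zero hinv] at hn
    simpa [p] using hn
  · rw [invariant_dist_eq_neg_add_zero hinv] at hm
    simpa [p] using hm

/-- If `D` is an invariant metric on `(ℤ × ℤ) × ℤ` whose restriction to
`ℤ² × {0}` is the ℓ¹ norm, then `e₁ = ((1,0),0)` and `e₂ = ((0,1),0)` cannot both lie within
distance `1/2` of the cyclic subgroup `{((0,0), k) : k ∈ ℤ}`. -/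
theorem not_both_close_to_cyclic_subgroup
    (D : (ℤ × ℤ) × ℤ → (ℤ × ℤ) × ℤ → ℝ)
    (hnonneg : ∀ x y, 0 ≤ D x y)
    (hzero : ∀ x y, D x y = 0 ↔ x = y)
    (hsymm : ∀ x y, D x y = D y x)
    (htri : ∀ x y z, D x z ≤ D x y + D y z)
    (hinv : ∀ a x y, D (a + x) (a + y) = D x y)
    (hext : ∀ a b : ℤ, D ((a, b), 0) ((0, 0), 0) = |(a : ℝ)| + |(b : ℝ)|) :
    ¬ ((∃ n : ℤ, D ((0, 0), n) ((1, 0), 0) < 1 / 2) ∧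
       (∃ m : ℤ, D ((0, 1), 0) ((0, 0), m) < 1 / 2)) :=
  not_both_close_to_cyclic_subgroup_general D hzero hsymm htri hinv hext
end
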